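/- arXiv:1311.0267 — 11 statements merged into one kernel-verified Lean document; each statement's English description precedes it below -/
import Mathlib

section
/- Weighted Cartan–Hadamard theorem along a geodesic (Theorem 4.2, analytic form): Let E be a real inner product space, let a : ℝ → ℝ be differentiable, and let R : ℝ → (E →L[ℝ] E) be a continuous family of self-adjoint operators such that ⟨R(t)v, v⟩ + (a'(t) + a(t)²)·‖v‖² ≤ 0 for every t ∈ ℝ and every v ∈ E. If J : ℝ → E is twice differentiable with J''(t) = −R(t)(J(t)) for all t, and J(0) = 0 and J(t₀) = 0 for some t₀ > 0, then J(t) = 0 for all t ∈ [0, t₀]. -/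
/-!
The Riccati-type quantity `h = ⟪J, J'⟫ - a ‖J‖²` satisfies
`h' = ‖J' - a J‖² - (⟪R J, J⟫ + (a' + a²) ‖J‖²) ≥ ‖J' - a J‖² ≥ 0`.
So `h` is monotone; it vanishes at `0` and `t₀`, hence is constant on `[0, t₀]`, which forces
`J' = a J` there. With the integrating factor `exp (-∫₀ᵗ a)` this linear equation and `J 0 = 0`
give `J = 0` on `[0, t₀]`.
-/

open scoped RealInnerProductSpace
open Set

section

variable {E : Type*} [NormedAddCommGroup E] [InnerProductSpace ℝ E]

theorem hasDerivAt_inner_sub_mul_norm_sq {a : ℝ → ℝ} {a' : ℝ} {J J' : ℝ → E} {J'' : E} {t : ℝ}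
    (ha : HasDerivAt a a' t) (hJ : HasDerivAt J (J' t) t) (hJ' : HasDerivAt J' J'' t) :
    HasDerivAt (fun s => ⟪J s, J' s⟫ - a s * ‖J s‖ ^ 2)
      (‖J' t - a t • J t‖ ^ 2 + ⟪J t, J''⟫ - (a' + a t ^ 2) * ‖J t‖ ^ 2) t := by
  refine ((hJ.inner ℝ hJ').sub (ha.mul hJ.norm_sq)).congr_deriv ?_
  rw [norm_sub_sq_real, norm_smul, mul_pow, Real.norm_eq_abs, sq_abs, real_inner_smul_right,
    real_inner_comm (J t), real_inner_self_eq_norm_sq]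
  ring

theorem hasDerivAt_eq_zero_of_monotoneOn_of_eq {h : ℝ → ℝ} {h' x y t : ℝ}
    (hmono : MonotoneOn h (Icc x y)) (hxy : x < y) (heq : h x = h y) (ht : t ∈ Icc x y)
    (hd : HasDerivAt h h' t) : h' = 0 := by
  have hconst : ∀ s ∈ Icc x y, h s = h x := fun s hs =>
    le_antisymm (heq ▸ hmono hs (right_mem_Icc.2 hxy.le) hs.2)
      (hmono (left_mem_Icc.2 hxy.le) hs hs.1)
  exact (uniqueDiffOn_Icc hxy t ht).eq_deriv _ hd.hasDerivWithinAt
    ((hasDerivWithinAt_const t _ (h x)).congr hconst (hconst t ht))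

theorem eq_zero_of_hasDerivAt_eq_smul {a : ℝ → ℝ} (ha : Continuous a) {J J' : ℝ → E}
    (hJ : ∀ t, HasDerivAt J (J' t) t) {x y : ℝ} (hlin : ∀ t ∈ Icc x y, J' t = a t • J t)
    (hx : J x = 0) : ∀ t ∈ Icc x y, J t = 0 := by
  set b : ℝ → ℝ := fun t => ∫ s in x..t, a s
  have hb : ∀ t, HasDerivAt b (a t) t := fun t =>
    intervalIntegral.integral_hasDerivAt_right (ha.intervalIntegrable _ _)
      (ha.stronglyMeasurableAtFilter _ _) ha.continuousAt
  have hW : ∀ t, HasDerivAt (fun s => Real.exp (-b s) • J s)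
      (Real.exp (-b t) • (J' t - a t • J t)) t := fun t => by
    refine ((hb t).neg.exp.smul (hJ t)).congr_deriv ?_
    rw [smul_sub, smul_smul, mul_neg, neg_smul, sub_eq_add_neg, Pi.neg_apply]
  have hconst : ∀ t ∈ Icc x y, Real.exp (-b t) • J t = Real.exp (-b x) • J x := by
    refine constant_of_has_deriv_right_zero (fun t _ => (hW t).continuousAt.continuousWithinAt)
      fun t ht => ?_
    simpa [hlin t (Ico_subset_Icc_self ht)] using (hW t).hasDerivWithinAt
  intro t ht
  simpa [hx, Real.exp_ne_zero] using hconst t ht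

end

theorem weighted_cartan_hadamard_general
    {E : Type*} [NormedAddCommGroup E] [InnerProductSpace ℝ E]
    (a a' : ℝ → ℝ) (ha : ∀ t, HasDerivAt a (a' t) t)
    (R : ℝ → E →L[ℝ] E)
    (hcurv : ∀ t (v : E), ⟪R t v, v⟫ + (a' t + (a t) ^ 2) * ‖v‖ ^ 2 ≤ 0)
    (J J' : ℝ → E)
    (hJ : ∀ t, HasDerivAt J (J' t) t)
    (hJ'' : ∀ t, HasDerivAt J' (-(R t (J t))) t)
    (t₀ : ℝ) (ht₀ : 0 < t₀) (hJ0 : J 0 = 0) (hJt₀ : J t₀ = 0) :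
    ∀ t ∈ Set.Icc (0 : ℝ) t₀, J t = 0 := by
  set h : ℝ → ℝ := fun s => ⟪J s, J' s⟫ - a s * ‖J s‖ ^ 2
  set h' : ℝ → ℝ := fun t =>
    ‖J' t - a t • J t‖ ^ 2 + ⟪J t, -(R t (J t))⟫ - (a' t + a t ^ 2) * ‖J t‖ ^ 2
  have hd (t : ℝ) : HasDerivAt h (h' t) t :=
    hasDerivAt_inner_sub_mul_norm_sq (ha t) (hJ t) (hJ'' t)
  have hle (t : ℝ) : ‖J' t - a t • J t‖ ^ 2 ≤ h' t := by
    have := hcurv t (J t)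
    simp only [h', inner_neg_right, real_inner_comm (R t (J t)) (J t)]
    linarith
  have hmono : Monotone h :=
    monotone_of_hasDerivAt_nonneg hd fun t => (sq_nonneg _).trans (hle t)
  have hlin : ∀ t ∈ Icc 0 t₀, J' t = a t • J t := fun t ht => by
    have h'0 := hasDerivAt_eq_zero_of_monotoneOn_of_eq (hmono.monotoneOn _) ht₀
      (by simp [h, hJ0, hJt₀]) ht (hd t)
    simpa only [h'0, sq_nonpos_iff, norm_eq_zero, sub_eq_zero] using hle t
  exact eq_zero_of_hasDerivAt_eq_smul (continuous_iff_continuousAt.2 fun t => (ha t).continuousAt)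
    hJ hlin hJ0

/-- **Weighted Cartan–Hadamard theorem along a geodesic** (analytic form).
If the strongly weighted curvature is nonpositive, i.e.
`⟪R t v, v⟫ + (a' t + (a t)²) ‖v‖² ≤ 0`, then a Jacobi field `J` (solution of
`J'' = -R J`) vanishing at `0` and at `t₀ > 0` vanishes on all of `[0, t₀]`. -/
theorem weighted_cartan_hadamard
    {E : Type*} [NormedAddCommGroup E] [InnerProductSpace ℝ E]
    (a a' : ℝ → ℝ) (ha : ∀ t, HasDerivAt a (a' t) t)
    (R : ℝ → E →L[ℝ] E) (hRcont : Continuous R)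
    (hRsa : ∀ t (v w : E), ⟪R t v, w⟫ = ⟪v, R t w⟫)
    (hcurv : ∀ t (v : E), ⟪R t v, v⟫ + (a' t + (a t) ^ 2) * ‖v‖ ^ 2 ≤ 0)
    (J J' : ℝ → E)
    (hJ : ∀ t, HasDerivAt J (J' t) t)
    (hJ'' : ∀ t, HasDerivAt J' (-(R t (J t))) t)
    (t₀ : ℝ) (ht₀ : 0 < t₀) (hJ0 : J 0 = 0) (hJt₀ : J t₀ = 0) :
    ∀ t ∈ Set.Icc (0 : ℝ) t₀, J t = 0 :=
  weighted_cartan_hadamard_general a a' ha R hcurv J J' hJ hJ'' t₀ ht₀ hJ0 hJt₀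
end

section
/- Monotonicity step in the proof of the weighted Cartan–Hadamard theorem: Let E be a real inner product space, let a : ℝ → ℝ be differentiable, and let R : ℝ → (E →L[ℝ] E) be a continuous family of self-adjoint operators such that ⟨R(t)v, v⟩ + (a'(t) + a(t)²)·‖v‖² ≤ 0 for every t ∈ ℝ and v ∈ E. Let J : ℝ → E be twice differentiable with J''(t) = −R(t)(J(t)) for all t and J(0) = 0, and let F : ℝ → ℝ satisfy F' = a. Then ⟨J'(t) − a(t)·J(t), J(t)⟩ ≥ 0 for all t ≥ 0, and the function t ↦ e^{−2F(t)}·‖J(t)‖² is monotone nondecreasing on [0, ∞). -/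
open scoped RealInnerProductSpace

/-!
Set `φ t = ⟪J' t - a t • J t, J t⟫`. Along a Jacobi field,
`φ' = ‖J' - a J‖² - ⟪R J, J⟫ - (a' + a²) ‖J‖²`, which is nonnegative under the curvature bound,
so `φ` is nondecreasing and vanishes at `0`. Since `(e^{-2F} ‖J‖²)' = 2 e^{-2F} φ`, the weighted
squared length is nondecreasing on `[0, ∞)`.
-/

section

variable {E : Type*} [NormedAddCommGroup E] [InnerProductSpace ℝ E]
  {a F : ℝ → ℝ} {J J' : ℝ → E} {t b : ℝ} {w : E}

theorem hasDerivAt_inner_sub_smul_self (ha : HasDerivAt a b t) (hJ : HasDerivAt J (J' t) t)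
    (hJ' : HasDerivAt J' w t) :
    HasDerivAt (fun s => ⟪J' s - a s • J s, J s⟫)
      (‖J' t - a t • J t‖ ^ 2 + ⟪w, J t⟫ - (b + a t ^ 2) * ‖J t‖ ^ 2) t := by
  refine ((hJ'.sub (ha.smul hJ)).inner ℝ hJ).congr_deriv ?_
  simp only [Pi.sub_apply, Pi.smul_apply', inner_sub_left, inner_add_left, real_inner_smul_left,
    real_inner_smul_right, real_inner_self_eq_norm_sq, real_inner_comm (J t) (J' t),
    norm_sub_sq_real, norm_smul, mul_pow, Real.norm_eq_abs, sq_abs]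
  ring

theorem hasDerivAt_exp_mul_norm_sq (hF : HasDerivAt F (a t) t) (hJ : HasDerivAt J (J' t) t) :
    HasDerivAt (fun s => Real.exp (-2 * F s) * ‖J s‖ ^ 2)
      (2 * Real.exp (-2 * F t) * ⟪J' t - a t • J t, J t⟫) t := by
  refine (((hF.const_mul (-2)).exp).mul hJ.norm_sq).congr_deriv ?_
  simp only [inner_sub_left, real_inner_smul_left, real_inner_self_eq_norm_sq,
    real_inner_comm (J t) (J' t)]
  ring

theorem monotone_inner_sub_smul_self_of_jacobi {a' : ℝ → ℝ} {R : ℝ → E →L[ℝ] E}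
    (ha : ∀ t, HasDerivAt a (a' t) t)
    (hcurv : ∀ t (v : E), ⟪R t v, v⟫ + (a' t + (a t) ^ 2) * ‖v‖ ^ 2 ≤ 0)
    (hJ : ∀ t, HasDerivAt J (J' t) t) (hJ'' : ∀ t, HasDerivAt J' (-(R t (J t))) t) :
    Monotone fun t => ⟪J' t - a t • J t, J t⟫ := by
  refine monotone_of_hasDerivAt_nonneg
    (fun t => hasDerivAt_inner_sub_smul_self (ha t) (hJ t) (hJ'' t)) fun t => ?_
  have := hcurv t (J t)
  rw [Pi.zero_apply, inner_neg_left]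
  linarith [sq_nonneg ‖J' t - a t • J t‖]

theorem monotoneOn_exp_mul_norm_sq_of_inner_nonneg (hF : ∀ t, HasDerivAt F (a t) t)
    (hJ : ∀ t, HasDerivAt J (J' t) t) (hφ : ∀ t, 0 ≤ t → 0 ≤ ⟪J' t - a t • J t, J t⟫) :
    MonotoneOn (fun t => Real.exp (-2 * F t) * ‖J t‖ ^ 2) (Set.Ici 0) := by
  have hderiv t := hasDerivAt_exp_mul_norm_sq (hF t) (hJ t)
  refine monotoneOn_of_hasDerivWithinAt_nonneg (convex_Ici 0)
    (fun t _ => (hderiv t).continuousAt.continuousWithinAt)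
    (fun t _ => (hderiv t).hasDerivWithinAt) fun t ht => ?_
  rw [interior_Ici] at ht
  have := hφ t (le_of_lt ht)
  positivity

end

theorem weighted_cartan_hadamard_monotonicity_general
    {E : Type*} [NormedAddCommGroup E] [InnerProductSpace ℝ E]
    (a a' : ℝ → ℝ) (ha : ∀ t, HasDerivAt a (a' t) t)
    (R : ℝ → E →L[ℝ] E)
    (hcurv : ∀ t (v : E), ⟪R t v, v⟫ + (a' t + (a t) ^ 2) * ‖v‖ ^ 2 ≤ 0)
    (J J' : ℝ → E)
    (hJ : ∀ t, HasDerivAt J (J' t) t)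
    (hJ'' : ∀ t, HasDerivAt J' (-(R t (J t))) t)
    (hJ0 : J 0 = 0)
    (F : ℝ → ℝ) (hF : ∀ t, HasDerivAt F (a t) t) :
    (∀ t, 0 ≤ t → 0 ≤ ⟪J' t - a t • J t, J t⟫) ∧
      MonotoneOn (fun t => Real.exp (-2 * F t) * ‖J t‖ ^ 2) (Set.Ici (0 : ℝ)) := by
  have hφ : ∀ t, 0 ≤ t → 0 ≤ ⟪J' t - a t • J t, J t⟫ := fun t ht => by
    simpa [hJ0] using monotone_inner_sub_smul_self_of_jacobi ha hcurv hJ hJ'' ht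
  exact ⟨hφ, monotoneOn_exp_mul_norm_sq_of_inner_nonneg hF hJ hφ⟩

/-- **Monotonicity step in the weighted Cartan–Hadamard theorem.**
Under the nonpositivity of the strongly weighted curvature, for a Jacobi field
`J` with `J 0 = 0` one has `⟪J' - a J, J⟫ ≥ 0` for `t ≥ 0`, and
`t ↦ e^{-2F t} ‖J t‖²` is monotone nondecreasing on `[0, ∞)`, where `F' = a`. -/
theorem weighted_cartan_hadamard_monotonicity
    {E : Type*} [NormedAddCommGroup E] [InnerProductSpace ℝ E]
    (a a' : ℝ → ℝ) (ha : ∀ t, HasDerivAt a (a' t) t)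
    (R : ℝ → E →L[ℝ] E) (hRcont : Continuous R)
    (hRsa : ∀ t (v w : E), ⟪R t v, w⟫ = ⟪v, R t w⟫)
    (hcurv : ∀ t (v : E), ⟪R t v, v⟫ + (a' t + (a t) ^ 2) * ‖v‖ ^ 2 ≤ 0)
    (J J' : ℝ → E)
    (hJ : ∀ t, HasDerivAt J (J' t) t)
    (hJ'' : ∀ t, HasDerivAt J' (-(R t (J t))) t)
    (hJ0 : J 0 = 0)
    (F : ℝ → ℝ) (hF : ∀ t, HasDerivAt F (a t) t) :
    (∀ t, 0 ≤ t → 0 ≤ ⟪J' t - a t • J t, J t⟫) ∧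
      MonotoneOn (fun t => Real.exp (-2 * F t) * ‖J t‖ ^ 2) (Set.Ici (0 : ℝ)) :=
  weighted_cartan_hadamard_monotonicity_general a a' ha R hcurv J J' hJ hJ'' hJ0 F hF
end

section
/- Key differential inequality for Jacobi fields under a weighted curvature upper bound: Let E be a real inner product space, let a : ℝ → ℝ be differentiable, let K ∈ ℝ, and let R : ℝ → (E →L[ℝ] E) be a continuous family of self-adjoint operators such that ⟨R(t)v, v⟩ + (a'(t) + a(t)²)·‖v‖² ≤ K·‖v‖² for every t ∈ ℝ and v ∈ E. Then for every twice differentiable J : ℝ → E with J''(t) = −R(t)(J(t)) for all t, the function h(t) = ⟨J'(t) − a(t)·J(t), J(t)⟩ is differentiable and satisfies h'(t) ≥ ‖J'(t) − a(t)·J(t)‖² − K·‖J(t)‖² for all t ∈ ℝ. -/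
open scoped RealInnerProductSpace

/-! Writing `W = J' - a • J`, the product rule and `J' = W + a • J` give the Riccati-type identity
`(⟪W, J⟫)' = ‖W‖² - ⟪R J, J⟫ - (a' + a²) ‖J‖²`, so the curvature bound applied to `v = J t` is
exactly the claimed inequality. -/

theorem HasDerivAt.inner_sub_smul_self {E : Type*} [NormedAddCommGroup E]
    [InnerProductSpace ℝ E] {f f' : ℝ → E} {a : ℝ → ℝ} {t a₁ : ℝ} {v : E}
    (hf : HasDerivAt f (f' t) t) (hf' : HasDerivAt f' v t) (ha : HasDerivAt a a₁ t) :
    HasDerivAt (fun s => ⟪f' s - a s • f s, f s⟫)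
      (‖f' t - a t • f t‖ ^ 2 + ⟪v, f t⟫ - (a₁ + a t ^ 2) * ‖f t‖ ^ 2) t := by
  refine ((hf'.sub (ha.smul hf)).inner ℝ hf).congr_deriv ?_
  rw [Pi.sub_apply, Pi.smul_apply']
  have hw : f' t = (f' t - a t • f t) + a t • f t := (sub_add_cancel _ _).symm
  generalize f' t - a t • f t = w at hw
  rw [hw]
  simp only [inner_sub_left, inner_add_left, inner_add_right,
    real_inner_smul_left, real_inner_smul_right, real_inner_self_eq_norm_sq]
  ring

theorem weighted_jacobi_differential_inequality_general
    {E : Type*} [NormedAddCommGroup E] [InnerProductSpace ℝ E]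
    (a a' : ℝ → ℝ) (ha : ∀ t, HasDerivAt a (a' t) t)
    (K : ℝ)
    (R : ℝ → E →L[ℝ] E)
    (hcurv : ∀ t (v : E), ⟪R t v, v⟫ + (a' t + (a t) ^ 2) * ‖v‖ ^ 2 ≤ K * ‖v‖ ^ 2)
    (J J' : ℝ → E)
    (hJ : ∀ t, HasDerivAt J (J' t) t)
    (hJ'' : ∀ t, HasDerivAt J' (-(R t (J t))) t) :
    ∀ t, ∃ d : ℝ,
      HasDerivAt (fun s => ⟪J' s - a s • J s, J s⟫) d t ∧
        ‖J' t - a t • J t‖ ^ 2 - K * ‖J t‖ ^ 2 ≤ d := by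
  intro t
  refine ⟨_, (hJ t).inner_sub_smul_self (hJ'' t) (ha t), ?_⟩
  rw [inner_neg_left]
  linarith [hcurv t (J t)]

/-- **Key differential inequality for Jacobi fields under a weighted curvature
upper bound.** If `⟪R t v, v⟫ + (a' t + (a t)²) ‖v‖² ≤ K ‖v‖²` and `J'' = -R J`,
then `h t = ⟪J' t - a t • J t, J t⟫` is differentiable with
`h' t ≥ ‖J' t - a t • J t‖² - K ‖J t‖²`. -/
theorem weighted_jacobi_differential_inequality
    {E : Type*} [NormedAddCommGroup E] [InnerProductSpace ℝ E]
    (a a' : ℝ → ℝ) (ha : ∀ t, HasDerivAt a (a' t) t)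
    (K : ℝ)
    (R : ℝ → E →L[ℝ] E) (hRcont : Continuous R)
    (hRsa : ∀ t (v w : E), ⟪R t v, w⟫ = ⟪v, R t w⟫)
    (hcurv : ∀ t (v : E), ⟪R t v, v⟫ + (a' t + (a t) ^ 2) * ‖v‖ ^ 2 ≤ K * ‖v‖ ^ 2)
    (J J' : ℝ → E)
    (hJ : ∀ t, HasDerivAt J (J' t) t)
    (hJ'' : ∀ t, HasDerivAt J' (-(R t (J t))) t) :
    ∀ t, ∃ d : ℝ,
      HasDerivAt (fun s => ⟪J' s - a s • J s, J s⟫) d t ∧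
        ‖J' t - a t • J t‖ ^ 2 - K * ‖J t‖ ^ 2 ≤ d :=
  weighted_jacobi_differential_inequality_general a a' ha K R hcurv J J' hJ hJ''
end

section
/- Riccati inequality for the logarithmic derivative of a weighted Jacobi field (step in the proof of Theorem 4.3): Let E be a real inner product space, let a : ℝ → ℝ be differentiable, let K ∈ ℝ, and let R : ℝ → (E →L[ℝ] E) be a continuous family of self-adjoint operators such that ⟨R(t)v, v⟩ + (a'(t) + a(t)²)·‖v‖² ≤ K·‖v‖² for every t ∈ ℝ and v ∈ E. Let F : ℝ → ℝ satisfy F' = a and set u = e^F. Let J : ℝ → E be twice differentiable with J''(t) = −R(t)(J(t)) for all t, and let I be an open interval on which J(t) ≠ 0. Then the function λ(t) = e^{2F(t)}·(⟨J'(t), J(t)⟩ − a(t)·‖J(t)‖²)/‖J(t)‖² is differentiable on I and satisfies λ'(t) ≥ −λ(t)²/u(t)² − K·u(t)² for all t ∈ I. -/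
open scoped RealInnerProductSpace

/-!
Write `x = ⟪J', J⟫ / ‖J‖²`, so that `lam = e^{2F} μ` with `μ = x - a`. Differentiating,
`lam' = e^{2F} (μ' + 2 a μ)`, while `-lam²/u² - K u² = e^{2F} (-μ² - K)`; hence the claim is the
scalar Riccati inequality `μ' + 2 a μ + μ² + K ≥ 0`. Since `x' = (‖J'‖² - ⟪R J, J⟫)/‖J‖² - 2 x²`,
this reduces to `x² ≤ ‖J'‖²/‖J‖²` (Cauchy–Schwarz) plus the curvature bound
`⟪R J, J⟫/‖J‖² + a' + a² ≤ K`.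
-/

section LogDerivNormSq

variable {E : Type*} [NormedAddCommGroup E] [InnerProductSpace ℝ E]

theorem sq_inner_div_norm_sq_le (v w : E) : (⟪v, w⟫ / ‖w‖ ^ 2) ^ 2 ≤ ‖v‖ ^ 2 / ‖w‖ ^ 2 := by
  rcases eq_or_ne w 0 with rfl | hw
  · simp
  have hcs : ⟪v, w⟫ ^ 2 ≤ (‖v‖ * ‖w‖) ^ 2 := by
    rw [← sq_abs]
    exact pow_le_pow_left₀ (abs_nonneg _) (abs_real_inner_le_norm v w) 2
  have hw2 : 0 < ‖w‖ ^ 2 := by positivity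
  rw [div_pow, div_le_div_iff₀ (by positivity) hw2]
  linear_combination ‖w‖ ^ 2 * hcs

theorem hasDerivAt_inner_div_norm_sq {J J' : ℝ → E} {w : E} {t : ℝ}
    (hJ : HasDerivAt J (J' t) t) (hJ' : HasDerivAt J' w t) (h0 : J t ≠ 0) :
    HasDerivAt (fun s => ⟪J' s, J s⟫ / ‖J s‖ ^ 2)
      ((⟪w, J t⟫ + ‖J' t‖ ^ 2) / ‖J t‖ ^ 2 - 2 * (⟪J' t, J t⟫ / ‖J t‖ ^ 2) ^ 2) t := by
  have hn : ‖J t‖ ^ 2 ≠ 0 := by positivity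
  refine ((hJ'.inner ℝ hJ).div hJ.norm_sq hn).congr_deriv ?_
  rw [real_inner_self_eq_norm_sq, real_inner_comm (J' t)]
  field_simp
  ring

end LogDerivNormSq

theorem exists_hasDerivAt_exp_mul_ge {μ F a : ℝ → ℝ} {μ' K t : ℝ}
    (hμ : HasDerivAt μ μ' t) (hF : HasDerivAt F (a t) t)
    (hric : -μ t ^ 2 - K ≤ μ' + 2 * a t * μ t) :
    ∃ d, HasDerivAt (fun s => Real.exp (2 * F s) * μ s) d t ∧
      -(Real.exp (2 * F t) * μ t) ^ 2 / Real.exp (F t) ^ 2 - K * Real.exp (F t) ^ 2 ≤ d := by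
  refine ⟨_, ((hF.const_mul 2).exp).mul hμ, ?_⟩
  have hexp : Real.exp (2 * F t) = Real.exp (F t) ^ 2 := by
    rw [two_mul, Real.exp_add, sq]
  rw [hexp]
  calc -(Real.exp (F t) ^ 2 * μ t) ^ 2 / Real.exp (F t) ^ 2 - K * Real.exp (F t) ^ 2
      = Real.exp (F t) ^ 2 * (-μ t ^ 2 - K) := by field_simp
    _ ≤ Real.exp (F t) ^ 2 * (μ' + 2 * a t * μ t) := by gcongr
    _ = Real.exp (F t) ^ 2 * (2 * a t) * μ t + Real.exp (F t) ^ 2 * μ' := by ring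

theorem weighted_jacobi_riccati_inequality_general
    {E : Type*} [NormedAddCommGroup E] [InnerProductSpace ℝ E]
    (a a' : ℝ → ℝ) (ha : ∀ t, HasDerivAt a (a' t) t)
    (K : ℝ)
    (R : ℝ → E →L[ℝ] E)
    (hcurv : ∀ t (v : E), ⟪R t v, v⟫ + (a' t + (a t) ^ 2) * ‖v‖ ^ 2 ≤ K * ‖v‖ ^ 2)
    (F : ℝ → ℝ) (hF : ∀ t, HasDerivAt F (a t) t)
    (u : ℝ → ℝ) (hu : u = fun t => Real.exp (F t))
    (J J' : ℝ → E)
    (hJ : ∀ t, HasDerivAt J (J' t) t)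
    (hJ'' : ∀ t, HasDerivAt J' (-(R t (J t))) t)
    (t₁ t₂ : ℝ) (hne : ∀ t ∈ Set.Ioo t₁ t₂, J t ≠ 0)
    (lam : ℝ → ℝ)
    (hlam : lam = fun t =>
      Real.exp (2 * F t) * ((⟪J' t, J t⟫ - a t * ‖J t‖ ^ 2) / ‖J t‖ ^ 2)) :
    ∀ t ∈ Set.Ioo t₁ t₂, ∃ d : ℝ,
      HasDerivAt lam d t ∧ -(lam t) ^ 2 / (u t) ^ 2 - K * (u t) ^ 2 ≤ d := by
  subst hu hlam
  intro t ht
  have hJt := hne t ht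
  have hn : 0 < ‖J t‖ ^ 2 := by positivity
  have hsplit : ∀ s, J s ≠ 0 →
      (⟪J' s, J s⟫ - a s * ‖J s‖ ^ 2) / ‖J s‖ ^ 2 = ⟪J' s, J s⟫ / ‖J s‖ ^ 2 - a s := by
    intro s hs
    rw [sub_div, mul_div_cancel_right₀ _ (by positivity)]
  have hμ := ((hasDerivAt_inner_div_norm_sq (hJ t) (hJ'' t) hJt).sub (ha t)).congr_of_eventuallyEq
    ((hJ t).continuousAt.eventually_ne hJt |>.mono fun s hs => hsplit s hs)
  refine exists_hasDerivAt_exp_mul_ge hμ (hF t) ?_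
  have hcs := sq_inner_div_norm_sq_le (J' t) (J t)
  have hcurv' : ⟪R t (J t), J t⟫ / ‖J t‖ ^ 2 ≤ K - a' t - a t ^ 2 := by
    rw [div_le_iff₀ hn]
    linarith [hcurv t (J t)]
  rw [hsplit t hJt, inner_neg_left, add_div, neg_div]
  linear_combination hcs + hcurv'

/-- **Riccati inequality for the logarithmic derivative of a weighted Jacobi
field.** With `F' = a`, `u = e^F`, and `J'' = -R J`, on any open interval where
`J ≠ 0` the function `λ t = e^{2F t}(⟪J' t, J t⟫ - a t ‖J t‖²)/‖J t‖²` is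
differentiable and satisfies `λ' ≥ -λ²/u² - K u²`. -/
theorem weighted_jacobi_riccati_inequality
    {E : Type*} [NormedAddCommGroup E] [InnerProductSpace ℝ E]
    (a a' : ℝ → ℝ) (ha : ∀ t, HasDerivAt a (a' t) t)
    (K : ℝ)
    (R : ℝ → E →L[ℝ] E) (hRcont : Continuous R)
    (hRsa : ∀ t (v w : E), ⟪R t v, w⟫ = ⟪v, R t w⟫)
    (hcurv : ∀ t (v : E), ⟪R t v, v⟫ + (a' t + (a t) ^ 2) * ‖v‖ ^ 2 ≤ K * ‖v‖ ^ 2)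
    (F : ℝ → ℝ) (hF : ∀ t, HasDerivAt F (a t) t)
    (u : ℝ → ℝ) (hu : u = fun t => Real.exp (F t))
    (J J' : ℝ → E)
    (hJ : ∀ t, HasDerivAt J (J' t) t)
    (hJ'' : ∀ t, HasDerivAt J' (-(R t (J t))) t)
    (t₁ t₂ : ℝ) (hne : ∀ t ∈ Set.Ioo t₁ t₂, J t ≠ 0)
    (lam : ℝ → ℝ)
    (hlam : lam = fun t =>
      Real.exp (2 * F t) * ((⟪J' t, J t⟫ - a t * ‖J t‖ ^ 2) / ‖J t‖ ^ 2)) :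
    ∀ t ∈ Set.Ioo t₁ t₂, ∃ d : ℝ,
      HasDerivAt lam d t ∧ -(lam t) ^ 2 / (u t) ^ 2 - K * (u t) ^ 2 ≤ d :=
  weighted_jacobi_riccati_inequality_general a a' ha K R hcurv F hF u hu J J' hJ hJ'' t₁ t₂ hne lam
    hlam
end

section
/- Lower Riccati comparison lemma (used in the proof of Theorem 4.3): Let K > 0, T > 0, and 0 < p ≤ q, and let u : (0,T) → ℝ satisfy p ≤ u(t) ≤ q for all t ∈ (0,T). Suppose λ : (0,T) → ℝ is differentiable with λ'(t) ≥ −λ(t)²/u(t)² − K·u(t)² for all t ∈ (0,T), and λ(t) → +∞ as t → 0⁺. Then λ(t) ≥ p·q·√K·cot((q·√K/p)·t) for all t ∈ (0, min(T, (p/q)·(π/√K))). -/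
/-!
Writing `λ = m cot θ` with `m = pq√K` turns the Riccati inequality into `θ' ≤ c := q√K/p`, since
`c / m = 1 / p²` and `c m = K q²`, and `u` may be replaced by `p` in the first term and by `q` in the
second. With `θ = π/2 - arctan (λ / m)`, the blow-up of `λ` at `0⁺` gives `θ(0⁺) = 0`, hence
`θ t ≤ c t < π`, and `cot` is decreasing on `(0, π)`.
-/

open Real Filter Set Topology

theorem cot_le_of_pi_div_two_sub_le_arctan {x y : ℝ} (hx₀ : 0 < x) (hxπ : x < π)
    (h : π / 2 - x ≤ arctan y) : cot x ≤ y := by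
  rw [← inv_inv (cot x), cot_inv_eq_tan, ← tan_pi_div_two_sub, ← tan_arctan y]
  exact strictMonoOn_tan.monotoneOn ⟨by linarith, by linarith⟩
    ⟨neg_pi_div_two_lt_arctan y, arctan_lt_pi_div_two y⟩ h

theorem monotoneOn_arctan_div_add_mul {m c : ℝ} (hm : 0 < m) {D : Set ℝ} (hD : Convex ℝ D)
    {f f' : ℝ → ℝ} (hf : ∀ x ∈ D, HasDerivAt f (f' x) x)
    (hf' : ∀ x ∈ D, -(c / m) * (f x ^ 2 + m ^ 2) ≤ f' x) :
    MonotoneOn (fun x => arctan (f x / m) + c * x) D := by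
  have hderiv : ∀ x ∈ D, HasDerivAt (fun x => arctan (f x / m) + c * x)
      (1 / (1 + (f x / m) ^ 2) * (f' x / m) + c) x := fun x hx =>
    ((hf x hx).div_const m).arctan.add (by simpa using (hasDerivAt_id x).const_mul c)
  refine monotoneOn_of_hasDerivWithinAt_nonneg hD
    (fun x hx => (hderiv x hx).continuousAt.continuousWithinAt)
    (fun x hx => (hderiv x (interior_subset hx)).hasDerivWithinAt) fun x hx => ?_
  have hcross : -(c * (f x ^ 2 + m ^ 2)) ≤ m * f' x :=
    calc -(c * (f x ^ 2 + m ^ 2)) = m * (-(c / m) * (f x ^ 2 + m ^ 2)) := by field_simp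
      _ ≤ m * f' x := by gcongr; exact hf' x (interior_subset hx)
  have hsum : 0 < f x ^ 2 + m ^ 2 := by positivity
  rw [show 1 / (1 + (f x / m) ^ 2) * (f' x / m) + c
      = (m * f' x + c * (f x ^ 2 + m ^ 2)) / (f x ^ 2 + m ^ 2) by field_simp; ring]
  exact div_nonneg (by linarith) hsum.le

theorem mul_cot_le_of_riccati {m c T : ℝ} (hm : 0 < m) (hc : 0 < c) {f f' : ℝ → ℝ}
    (hf : ∀ x ∈ Ioo 0 T, HasDerivAt f (f' x) x)
    (hf' : ∀ x ∈ Ioo 0 T, -(c / m) * (f x ^ 2 + m ^ 2) ≤ f' x)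
    (hblow : Tendsto f (𝓝[>] 0) atTop) {t : ℝ} (ht : t ∈ Ioo 0 T) (htπ : c * t < π) :
    m * cot (c * t) ≤ f t := by
  have hmono := monotoneOn_arctan_div_add_mul hm (convex_Ioo 0 T) hf hf'
  have hlim : Tendsto (fun x => arctan (f x / m) + c * x) (𝓝[>] 0) (𝓝 (π / 2 + c * 0)) :=
    ((tendsto_arctan_atTop.mono_right nhdsWithin_le_nhds).comp (hblow.atTop_div_const hm)).add
      ((continuous_const_mul c).tendsto 0 |>.mono_left nhdsWithin_le_nhds)
  have hle : π / 2 ≤ arctan (f t / m) + c * t := by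
    refine le_of_tendsto (by simpa using hlim) ?_
    filter_upwards [Ioo_mem_nhdsGT ht.1] with x hx
    exact hmono ⟨hx.1, hx.2.trans ht.2⟩ ht hx.2.le
  rw [← le_div_iff₀' hm]
  exact cot_le_of_pi_div_two_sub_le_arctan (mul_pos hc ht.1) htπ (by linarith)

theorem lower_riccati_comparison_general
    (K T p q : ℝ) (hK : 0 < K) (hp : 0 < p) (hpq : p ≤ q)
    (u : ℝ → ℝ) (hu : ∀ t ∈ Set.Ioo (0 : ℝ) T, p ≤ u t ∧ u t ≤ q)
    (lam lam' : ℝ → ℝ)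
    (hlam : ∀ t ∈ Set.Ioo (0 : ℝ) T, HasDerivAt lam (lam' t) t)
    (hineq : ∀ t ∈ Set.Ioo (0 : ℝ) T,
      -(lam t) ^ 2 / (u t) ^ 2 - K * (u t) ^ 2 ≤ lam' t)
    (hblow : Filter.Tendsto lam (nhdsWithin 0 (Set.Ioi 0)) Filter.atTop) :
    ∀ t ∈ Set.Ioo (0 : ℝ) (min T (p / q * (Real.pi / Real.sqrt K))),
      p * q * Real.sqrt K * Real.cot (q * Real.sqrt K / p * t) ≤ lam t := by
  rintro t ⟨ht₀, htmin⟩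
  obtain ⟨htT, htπ⟩ := lt_min_iff.mp htmin
  have hq : 0 < q := hp.trans_le hpq
  have hsK : 0 < √K := sqrt_pos.mpr hK
  have hcπ : q * √K / p * t < π :=
    calc q * √K / p * t < q * √K / p * (p / q * (π / √K)) := by gcongr
      _ = π := by field_simp
  refine mul_cot_le_of_riccati (by positivity) (by positivity) hlam (fun s hs => ?_) hblow
    ⟨ht₀, htT⟩ hcπ
  obtain ⟨hpu, huq⟩ := hu s hs
  have hu₀ : 0 < u s := hp.trans_le hpu
  calc -(q * √K / p / (p * q * √K)) * (lam s ^ 2 + (p * q * √K) ^ 2)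
      = -(lam s ^ 2 / p ^ 2) - K * q ^ 2 := by field_simp; rw [sq_sqrt hK.le]; ring
    _ ≤ -(lam s ^ 2 / u s ^ 2) - K * u s ^ 2 := by gcongr
    _ ≤ lam' s := by simpa only [neg_div] using hineq s hs

/-- **Lower Riccati comparison lemma.** If `λ' ≥ -λ²/u² - K u²` with
`p ≤ u ≤ q` on `(0, T)` and `λ → +∞` as `t → 0⁺`, then
`λ t ≥ p q √K · cot((q √K / p) t)` on `(0, min T ((p/q)·π/√K))`. -/
theorem lower_riccati_comparison
    (K T p q : ℝ) (hK : 0 < K) (hT : 0 < T) (hp : 0 < p) (hpq : p ≤ q)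
    (u : ℝ → ℝ) (hu : ∀ t ∈ Set.Ioo (0 : ℝ) T, p ≤ u t ∧ u t ≤ q)
    (lam lam' : ℝ → ℝ)
    (hlam : ∀ t ∈ Set.Ioo (0 : ℝ) T, HasDerivAt lam (lam' t) t)
    (hineq : ∀ t ∈ Set.Ioo (0 : ℝ) T,
      -(lam t) ^ 2 / (u t) ^ 2 - K * (u t) ^ 2 ≤ lam' t)
    (hblow : Filter.Tendsto lam (nhdsWithin 0 (Set.Ioi 0)) Filter.atTop) :
    ∀ t ∈ Set.Ioo (0 : ℝ) (min T (p / q * (Real.pi / Real.sqrt K))),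
      p * q * Real.sqrt K * Real.cot (q * Real.sqrt K / p * t) ≤ lam t :=
  lower_riccati_comparison_general K T p q hK hp hpq u hu lam lam' hlam hineq hblow
end

section
/- Weighted conjugate radius estimate along a geodesic (Theorem 4.3, analytic form): Let E be a real inner product space, let a : ℝ → ℝ be differentiable, let K > 0, and let R : ℝ → (E →L[ℝ] E) be a continuous family of self-adjoint operators such that ⟨R(t)v, v⟩ + (a'(t) + a(t)²)·‖v‖² ≤ K·‖v‖² for every t ∈ ℝ and v ∈ E. Let J : ℝ → E be twice differentiable with J''(t) = −R(t)(J(t)) for all t, with J not identically zero, and suppose J(t₁) = 0 and J(t₂) = 0 with t₁ < t₂. Let F : ℝ → ℝ satisfy F' = a, and let u_min and u_max denote the minimum and maximum of e^{F} on [t₁, t₂]. Then t₂ − t₁ ≥ (u_min/u_max)·(π/√K). -/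
open scoped RealInnerProductSpace
open Real Set Filter Topology intervalIntegral

/-
Put `H = e^{-F} • J`; then `H' = e^{-F} • (J' - a • J)` and `H` vanishes at `t₁` and `t₂`.
By the curvature bound, `⟪J, J'⟫ - a ‖J‖²` has derivative at least `‖J' - a • J‖² - K ‖J‖²`
and vanishes at both zeros, so `∫ ‖J' - a • J‖² ≤ K ∫ ‖J‖²`. Trading the weight `e^{2F}` for
`u_min²` and `u_max²` gives `u_min² ∫ ‖H'‖² ≤ K u_max² ∫ ‖H‖²`, while Wirtinger's inequality gives
`(π / (t₂ - t₁))² ∫ ‖H‖² ≤ ∫ ‖H'‖²`. Finally `∫ ‖H‖² > 0`, because by uniqueness for the linear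
ODE a nontrivial Jacobi field cannot vanish on an interval.
-/

section Wirtinger

variable {E : Type*} [NormedAddCommGroup E] [InnerProductSpace ℝ E]

theorem hasDerivAt_mul_tan_mul_sub {ω c t : ℝ} (h : cos (ω * (t - c)) ≠ 0) :
    HasDerivAt (fun s => ω * tan (ω * (s - c))) (ω ^ 2 + (ω * tan (ω * (t - c))) ^ 2) t := by
  have hlin : HasDerivAt (fun s => ω * (s - c)) ω t := by
    simpa using ((hasDerivAt_id t).sub_const c).const_mul ω
  refine (((hasDerivAt_tan h).comp t hlin).const_mul ω).congr_deriv ?_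
  rw [tan_eq_sin_div_cos]
  field_simp
  rw [cos_sq_add_sin_sq, mul_one]

theorem sq_mul_integral_norm_sq_le_integral_norm_deriv_sq {H H' : ℝ → E} {a b ω : ℝ}
    (hab : a ≤ b) (hω : 0 ≤ ω) (hωπ : ω * (b - a) < π)
    (hH : ∀ t ∈ Icc a b, HasDerivAt H (H' t) t) (hH' : ContinuousOn H' (Icc a b))
    (ha : H a = 0) (hb : H b = 0) :
    ω ^ 2 * ∫ t in a..b, ‖H t‖ ^ 2 ≤ ∫ t in a..b, ‖H' t‖ ^ 2 := by
  -- `φ` solves the Riccati equation `φ' = ω² + φ²` on `[a, b]`, and then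
  -- `(φ ‖H‖²)' = ω² ‖H‖² - ‖H'‖² + ‖H' + φ H‖²`.
  set φ : ℝ → ℝ := fun s => ω * tan (ω * (s - (a + b) / 2))
  have hφ : ∀ t ∈ Icc a b, HasDerivAt φ (ω ^ 2 + φ t ^ 2) t := fun t ht =>
    hasDerivAt_mul_tan_mul_sub (cos_pos_of_mem_Ioo
      ⟨by nlinarith [ht.1, ht.2], by nlinarith [ht.1, ht.2]⟩).ne'
  have hP : ∀ t ∈ Icc a b, HasDerivAt (fun s => φ s * ‖H s‖ ^ 2)
      ((ω ^ 2 + φ t ^ 2) * ‖H t‖ ^ 2 + φ t * (2 * ⟪H t, H' t⟫)) t := fun t ht =>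
    (hφ t ht).mul (hH t ht).norm_sq
  have hHc : ContinuousOn H (Icc a b) := fun t ht => (hH t ht).continuousAt.continuousWithinAt
  have hint : IntervalIntegrable (fun t => ‖H t‖ ^ 2) MeasureTheory.volume a b :=
    (hHc.norm.pow 2).intervalIntegrable_of_Icc hab
  have hint' : IntervalIntegrable (fun t => ‖H' t‖ ^ 2) MeasureTheory.volume a b :=
    (hH'.norm.pow 2).intervalIntegrable_of_Icc hab
  have key : ∫ t in a..b, (ω ^ 2 * ‖H t‖ ^ 2 - ‖H' t‖ ^ 2)
      ≤ φ b * ‖H b‖ ^ 2 - φ a * ‖H a‖ ^ 2 := by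
    refine integral_le_sub_of_hasDeriv_right_of_le hab
      (fun t ht => (hP t ht).continuousAt.continuousWithinAt)
      (fun t ht => (hP t (Ioo_subset_Icc_self ht)).hasDerivWithinAt)
      (((continuousOn_const.mul (hHc.norm.pow 2)).sub (hH'.norm.pow 2)).integrableOn_Icc)
      fun t _ => ?_
    have h := sq_nonneg ‖H' t + φ t • H t‖
    rw [norm_add_sq_real, real_inner_smul_right, norm_smul, mul_pow, norm_eq_abs, sq_abs,
      real_inner_comm] at h
    linarith
  rw [ha, hb, integral_sub (hint.const_mul _) hint', integral_const_mul] at key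
  simpa using key

theorem wirtinger_inequality {H H' : ℝ → E} {a b : ℝ} (hab : a < b)
    (hH : ∀ t ∈ Icc a b, HasDerivAt H (H' t) t) (hH' : ContinuousOn H' (Icc a b))
    (ha : H a = 0) (hb : H b = 0) :
    (π / (b - a)) ^ 2 * ∫ t in a..b, ‖H t‖ ^ 2 ≤ ∫ t in a..b, ‖H' t‖ ^ 2 := by
  have hL : 0 < b - a := sub_pos.2 hab
  have hlim : Tendsto (fun ω : ℝ => ω ^ 2 * ∫ t in a..b, ‖H t‖ ^ 2) (𝓝[<] (π / (b - a)))
      (𝓝 ((π / (b - a)) ^ 2 * ∫ t in a..b, ‖H t‖ ^ 2)) :=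
    (((continuous_pow 2).mul continuous_const).tendsto _).mono_left nhdsWithin_le_nhds
  refine le_of_tendsto hlim ?_
  filter_upwards [Ioo_mem_nhdsLT (div_pos pi_pos hL)] with ω hω
  exact sq_mul_integral_norm_sq_le_integral_norm_deriv_sq hab.le hω.1.le
    ((lt_div_iff₀ hL).1 hω.2) hH hH' ha hb

end Wirtinger

theorem eq_zero_of_hasDerivAt_clm_apply {F : Type*} [NormedAddCommGroup F] [NormedSpace ℝ F]
    {A : ℝ → F →L[ℝ] F} (hA : Continuous A) {x : ℝ → F}
    (hx : ∀ t, HasDerivAt x (A t (x t)) t) {t₀ : ℝ} (h₀ : x t₀ = 0) : x = 0 := by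
  funext t
  obtain ⟨a, b, ht, ht₀⟩ : ∃ a b, t ∈ Ioo a b ∧ t₀ ∈ Ioo a b :=
    ⟨min t t₀ - 1, max t t₀ + 1, by grind, by grind⟩
  obtain ⟨C, hC⟩ := (isCompact_Icc (a := a) (b := b)).exists_bound_of_continuousOn hA.continuousOn
  refine ODE_solution_unique_of_mem_Ioo (v := fun s y => A s y) (s := fun _ => univ)
    (K := C.toNNReal) (fun s hs => ?_) ht₀ (fun s _ => ⟨hx s, trivial⟩)
    (fun s _ => ⟨by simp, trivial⟩) h₀ ht
  refine ((A s).lipschitz.weaken ?_).lipschitzOnWith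
  rw [← NNReal.coe_le_coe, coe_nnnorm]
  exact (hC s (Ioo_subset_Icc_self hs)).trans (le_coe_toNNReal C)

section Jacobi

variable {E : Type*} [NormedAddCommGroup E] [NormedSpace ℝ E]
  {R : ℝ → E →L[ℝ] E} {J J' : ℝ → E}

theorem jacobi_eq_zero_of_eq_zero_of_deriv_eq_zero (hR : Continuous R)
    (hJ : ∀ t, HasDerivAt J (J' t) t) (hJ' : ∀ t, HasDerivAt J' (-R t (J t)) t) {t₀ : ℝ}
    (h₀ : J t₀ = 0) (h₀' : J' t₀ = 0) : J = 0 := by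
  set A : ℝ → E × E →L[ℝ] E × E := fun t =>
    (ContinuousLinearMap.snd ℝ E E).prod (-(R t).comp (ContinuousLinearMap.fst ℝ E E))
  have hA : Continuous A := (ContinuousLinearMap.prodₗᵢ ℝ).continuous.comp
    (continuous_const.prodMk (hR.clm_comp continuous_const).neg)
  have h := eq_zero_of_hasDerivAt_clm_apply hA (x := fun t => (J t, J' t))
    (fun t => (hJ t).prodMk (hJ' t)) (t₀ := t₀) (by simp [h₀, h₀'])
  funext t
  exact congrArg Prod.fst (congrFun h t)

theorem exists_mem_Ioo_jacobi_ne_zero (hR : Continuous R)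
    (hJ : ∀ t, HasDerivAt J (J' t) t) (hJ' : ∀ t, HasDerivAt J' (-R t (J t)) t)
    (hJne : ∃ s, J s ≠ 0) {t₁ t₂ : ℝ} (ht : t₁ < t₂) : ∃ t ∈ Ioo t₁ t₂, J t ≠ 0 := by
  by_contra! hzero
  obtain ⟨s, hs⟩ := hJne
  obtain ⟨m, hm⟩ := nonempty_Ioo.2 ht
  have hJm : J =ᶠ[𝓝 m] fun _ => 0 := eventually_of_mem (isOpen_Ioo.mem_nhds hm) hzero
  have hJ'm : J' m = 0 := (hJ m).unique ((hasDerivAt_const m 0).congr_of_eventuallyEq hJm)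
  exact hs (congrFun (jacobi_eq_zero_of_eq_zero_of_deriv_eq_zero hR hJ hJ' (hzero m hm) hJ'm) s)

end Jacobi

section Weight

variable {E : Type*} [NormedAddCommGroup E] [NormedSpace ℝ E]

theorem hasDerivAt_exp_neg_smul {F : ℝ → ℝ} {a t : ℝ} {J : ℝ → E} {J' : E}
    (hF : HasDerivAt F a t) (hJ : HasDerivAt J J' t) :
    HasDerivAt (fun s => exp (-F s) • J s) (exp (-F t) • (J' - a • J t)) t := by
  refine (hF.neg.exp.smul hJ).congr_deriv ?_
  simp only [Pi.neg_apply, smul_sub, smul_smul]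
  module

theorem norm_eq_exp_mul_norm_exp_neg_smul (x : ℝ) (v : E) : ‖v‖ = exp x * ‖exp (-x) • v‖ := by
  rw [norm_smul, norm_of_nonneg (exp_pos _).le, ← mul_assoc, ← exp_add, add_neg_cancel, exp_zero,
    one_mul]

variable {F : ℝ → ℝ} {g : ℝ → E} {a b : ℝ}

theorem sq_mul_integral_norm_exp_neg_smul_sq_le {c : ℝ} (hab : a ≤ b) (hc : 0 ≤ c)
    (hF : Continuous F) (hg : Continuous g) (h : ∀ t ∈ Icc a b, c ≤ exp (F t)) :
    c ^ 2 * ∫ t in a..b, ‖exp (-F t) • g t‖ ^ 2 ≤ ∫ t in a..b, ‖g t‖ ^ 2 := by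
  rw [← integral_const_mul]
  refine integral_mono_on hab (Continuous.intervalIntegrable (by fun_prop) _ _)
    (Continuous.intervalIntegrable (by fun_prop) _ _) fun t ht => ?_
  rw [norm_eq_exp_mul_norm_exp_neg_smul (F t) (g t), mul_pow]
  exact mul_le_mul_of_nonneg_right (pow_le_pow_left₀ hc (h t ht) 2) (sq_nonneg _)

theorem integral_norm_sq_le_sq_mul_integral_norm_exp_neg_smul_sq {C : ℝ} (hab : a ≤ b)
    (hF : Continuous F) (hg : Continuous g) (h : ∀ t ∈ Icc a b, exp (F t) ≤ C) :
    ∫ t in a..b, ‖g t‖ ^ 2 ≤ C ^ 2 * ∫ t in a..b, ‖exp (-F t) • g t‖ ^ 2 := by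
  rw [← integral_const_mul]
  refine integral_mono_on hab (Continuous.intervalIntegrable (by fun_prop) _ _)
    (Continuous.intervalIntegrable (by fun_prop) _ _) fun t ht => ?_
  rw [norm_eq_exp_mul_norm_exp_neg_smul (F t) (g t), mul_pow]
  exact mul_le_mul_of_nonneg_right (pow_le_pow_left₀ (exp_pos _).le (h t ht) 2) (sq_nonneg _)

end Weight

section Energy

variable {E : Type*} [NormedAddCommGroup E] [InnerProductSpace ℝ E]

theorem integral_norm_deriv_sub_smul_sq_le {a a' : ℝ → ℝ} {K : ℝ} {R : ℝ → E →L[ℝ] E}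
    {J J' : ℝ → E} (ha : ∀ t, HasDerivAt a (a' t) t)
    (hcurv : ∀ t (v : E), ⟪R t v, v⟫ + (a' t + a t ^ 2) * ‖v‖ ^ 2 ≤ K * ‖v‖ ^ 2)
    (hJ : ∀ t, HasDerivAt J (J' t) t) (hJ' : ∀ t, HasDerivAt J' (-R t (J t)) t)
    {t₁ t₂ : ℝ} (ht : t₁ ≤ t₂) (hz₁ : J t₁ = 0) (hz₂ : J t₂ = 0) :
    ∫ t in t₁..t₂, ‖J' t - a t • J t‖ ^ 2 ≤ K * ∫ t in t₁..t₂, ‖J t‖ ^ 2 := by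
  have haC : Continuous a := continuous_iff_continuousAt.2 fun t => (ha t).continuousAt
  have hJC : Continuous J := continuous_iff_continuousAt.2 fun t => (hJ t).continuousAt
  have hJ'C : Continuous J' := continuous_iff_continuousAt.2 fun t => (hJ' t).continuousAt
  have hG : ∀ t, HasDerivAt (fun s => ⟪J s, J' s⟫ - a s * ‖J s‖ ^ 2)
      (⟪J t, -R t (J t)⟫ + ⟪J' t, J' t⟫ - (a' t * ‖J t‖ ^ 2 + a t * (2 * ⟪J t, J' t⟫))) t :=
    fun t => ((hJ t).inner ℝ (hJ' t)).sub ((ha t).mul (hJ t).norm_sq)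
  have key : ∫ t in t₁..t₂, (‖J' t - a t • J t‖ ^ 2 - K * ‖J t‖ ^ 2)
      ≤ (⟪J t₂, J' t₂⟫ - a t₂ * ‖J t₂‖ ^ 2) - (⟪J t₁, J' t₁⟫ - a t₁ * ‖J t₁‖ ^ 2) := by
    refine integral_le_sub_of_hasDeriv_right_of_le ht
      (fun t _ => (hG t).continuousAt.continuousWithinAt) (fun t _ => (hG t).hasDerivWithinAt)
      (Continuous.integrableOn_Icc (by fun_prop)) fun t _ => ?_
    have hc := hcurv t (J t)
    rw [norm_sub_sq_real, real_inner_smul_right, norm_smul, mul_pow, norm_eq_abs, sq_abs,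
      inner_neg_right, real_inner_self_eq_norm_sq, real_inner_comm (J t) (J' t)]
    rw [real_inner_comm] at hc
    linarith
  rw [hz₁, hz₂, integral_sub (Continuous.intervalIntegrable (by fun_prop) _ _)
    (Continuous.intervalIntegrable (by fun_prop) _ _), integral_const_mul] at key
  simpa using key

end Energy

theorem intervalIntegral_pos_of_continuous_nonneg {f : ℝ → ℝ} {a b t : ℝ} (hf : Continuous f)
    (hf₀ : 0 ≤ f) (ht : t ∈ Ioo a b) (hft : f t ≠ 0) : 0 < ∫ x in a..b, f x := by
  rw [integral_pos_iff_support_of_nonneg_ae' (Eventually.of_forall hf₀) (hf.intervalIntegrable a b)]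
  refine ⟨ht.1.trans ht.2, ?_⟩
  calc (0 : ENNReal) < MeasureTheory.volume (Function.support f ∩ Ioo a b) :=
        (hf.isOpen_support.inter isOpen_Ioo).measure_pos _ ⟨t, hft, ht⟩
    _ ≤ MeasureTheory.volume (Function.support f ∩ Ioc a b) :=
        MeasureTheory.measure_mono (inter_subset_inter_right _ Ioo_subset_Ioc_self)

theorem div_mul_pi_div_sqrt_le {m M K L : ℝ} (hm : 0 ≤ m) (hM : 0 < M) (hK : 0 < K)
    (hL : 0 < L) (h : m ^ 2 * (π / L) ^ 2 ≤ K * M ^ 2) : m / M * (π / √K) ≤ L := by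
  have hsq : m * (π / L) ≤ M * √K := by
    rw [← pow_le_pow_iff_left₀ (by positivity) (by positivity) two_ne_zero, mul_pow, mul_pow,
      sq_sqrt hK.le]
    linarith
  rw [div_mul_div_comm, div_le_iff₀ (by positivity)]
  rw [mul_div_assoc', div_le_iff₀ hL] at hsq
  linarith

theorem weighted_conjugate_radius_general
    {E : Type*} [NormedAddCommGroup E] [InnerProductSpace ℝ E]
    (a a' : ℝ → ℝ) (ha : ∀ t, HasDerivAt a (a' t) t)
    (K : ℝ) (hK : 0 < K)
    (R : ℝ → E →L[ℝ] E) (hRcont : Continuous R)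
    (hcurv : ∀ t (v : E), ⟪R t v, v⟫ + (a' t + (a t) ^ 2) * ‖v‖ ^ 2 ≤ K * ‖v‖ ^ 2)
    (J J' : ℝ → E)
    (hJ : ∀ t, HasDerivAt J (J' t) t)
    (hJ'' : ∀ t, HasDerivAt J' (-(R t (J t))) t)
    (hJne : ∃ s, J s ≠ 0)
    (t₁ t₂ : ℝ) (ht : t₁ < t₂) (hz₁ : J t₁ = 0) (hz₂ : J t₂ = 0)
    (F : ℝ → ℝ) (hF : ∀ t, HasDerivAt F (a t) t)
    (umin umax : ℝ)
    (humin : umin = sInf ((fun t => Real.exp (F t)) '' Set.Icc t₁ t₂))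
    (humax : umax = sSup ((fun t => Real.exp (F t)) '' Set.Icc t₁ t₂)) :
    umin / umax * (Real.pi / Real.sqrt K) ≤ t₂ - t₁ := by
  have hFC : Continuous F := continuous_iff_continuousAt.2 fun t => (hF t).continuousAt
  have haC : Continuous a := continuous_iff_continuousAt.2 fun t => (ha t).continuousAt
  have hJC : Continuous J := continuous_iff_continuousAt.2 fun t => (hJ t).continuousAt
  have hJ'C : Continuous J' := continuous_iff_continuousAt.2 fun t => (hJ'' t).continuousAt
  have hu : ContinuousOn (fun t => exp (F t)) (Icc t₁ t₂) := by fun_prop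
  obtain ⟨s, -, hs⟩ := (isCompact_Icc.image_of_continuousOn hu).sInf_mem
    ((nonempty_Icc.2 ht.le).image _)
  have humin_pos : 0 < umin := humin ▸ hs ▸ exp_pos (F s)
  have humax_pos : 0 < umax :=
    humax ▸ (exp_pos _).trans_le (hu.le_sSup_image_Icc (left_mem_Icc.2 ht.le))
  set H : ℝ → E := fun t => exp (-F t) • J t
  have hW := wirtinger_inequality ht (H := H) (H' := fun t => exp (-F t) • (J' t - a t • J t))
    (fun t _ => hasDerivAt_exp_neg_smul (hF t) (hJ t)) (Continuous.continuousOn (by fun_prop))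
    (by simp [H, hz₁]) (by simp [H, hz₂])
  have hE := integral_norm_deriv_sub_smul_sq_le ha hcurv hJ hJ'' ht.le hz₁ hz₂
  have hmin := sq_mul_integral_norm_exp_neg_smul_sq_le ht.le humin_pos.le hFC
    (g := fun t => J' t - a t • J t) (by fun_prop) fun t ht => humin ▸ hu.sInf_image_Icc_le ht
  have hmax := integral_norm_sq_le_sq_mul_integral_norm_exp_neg_smul_sq ht.le hFC hJC
    fun t ht => humax ▸ hu.le_sSup_image_Icc ht
  obtain ⟨t₀, ht₀, hJt₀⟩ := exists_mem_Ioo_jacobi_ne_zero hRcont hJ hJ'' hJne ht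
  have hI : 0 < ∫ t in t₁..t₂, ‖H t‖ ^ 2 :=
    intervalIntegral_pos_of_continuous_nonneg (by fun_prop) (fun _ => sq_nonneg _) ht₀
      (by simpa [H, norm_smul] using hJt₀)
  refine div_mul_pi_div_sqrt_le humin_pos.le humax_pos hK (sub_pos.2 ht)
    (le_of_mul_le_mul_right ?_ hI)
  calc umin ^ 2 * (π / (t₂ - t₁)) ^ 2 * ∫ t in t₁..t₂, ‖H t‖ ^ 2
      ≤ umin ^ 2 * ∫ t in t₁..t₂, ‖exp (-F t) • (J' t - a t • J t)‖ ^ 2 := by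
        rw [mul_assoc]; gcongr
    _ ≤ K * ∫ t in t₁..t₂, ‖J t‖ ^ 2 := hmin.trans hE
    _ ≤ K * umax ^ 2 * ∫ t in t₁..t₂, ‖H t‖ ^ 2 := by
        rw [mul_assoc]; gcongr

/-- **Weighted conjugate radius estimate along a geodesic** (analytic form).
Under the strongly weighted curvature upper bound `K > 0`, any two zeros of a
nontrivial Jacobi field `J` (solution of `J'' = -R J`) are at distance at least
`(u_min/u_max) · π/√K`, where `u_min`, `u_max` are the extrema of `e^F` on the
interval between the zeros and `F' = a`. -/
theorem weighted_conjugate_radius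
    {E : Type*} [NormedAddCommGroup E] [InnerProductSpace ℝ E]
    (a a' : ℝ → ℝ) (ha : ∀ t, HasDerivAt a (a' t) t)
    (K : ℝ) (hK : 0 < K)
    (R : ℝ → E →L[ℝ] E) (hRcont : Continuous R)
    (hRsa : ∀ t (v w : E), ⟪R t v, w⟫ = ⟪v, R t w⟫)
    (hcurv : ∀ t (v : E), ⟪R t v, v⟫ + (a' t + (a t) ^ 2) * ‖v‖ ^ 2 ≤ K * ‖v‖ ^ 2)
    (J J' : ℝ → E)
    (hJ : ∀ t, HasDerivAt J (J' t) t)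
    (hJ'' : ∀ t, HasDerivAt J' (-(R t (J t))) t)
    (hJne : ∃ s, J s ≠ 0)
    (t₁ t₂ : ℝ) (ht : t₁ < t₂) (hz₁ : J t₁ = 0) (hz₂ : J t₂ = 0)
    (F : ℝ → ℝ) (hF : ∀ t, HasDerivAt F (a t) t)
    (umin umax : ℝ)
    (humin : umin = sInf ((fun t => Real.exp (F t)) '' Set.Icc t₁ t₂))
    (humax : umax = sSup ((fun t => Real.exp (F t)) '' Set.Icc t₁ t₂)) :
    umin / umax * (Real.pi / Real.sqrt K) ≤ t₂ - t₁ :=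
  weighted_conjugate_radius_general a a' ha K hK R hRcont hcurv J J' hJ hJ'' hJne t₁ t₂ ht hz₁ hz₂ F
    hF umin umax humin humax
end

section
/- Upper Riccati comparison lemma with variable coefficient (used in the proofs of Theorem 1.5 and Lemma 7.1): Let k > 0, T > 0, and 0 < v_min ≤ v_max, and let v : (0,T) → ℝ satisfy v_min ≤ v(t) ≤ v_max for all t ∈ (0,T). Suppose λ : (0,T) → ℝ is differentiable with λ'(t) ≤ −λ(t)²/v(t)² − k·v(t)² for all t ∈ (0,T). Then λ(t) ≤ v_min·v_max·√k·cot((v_min·√k/v_max)·t) for all t ∈ (0, min(T, (v_max/v_min)·(π/√k))). -/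
/-!
Since `vmin ≤ v ≤ vmax`, the function `μ = λ / c` with `c = vmin vmax √k` satisfies
`μ' ≤ -a (1 + μ²)` for `a = vmin √k / vmax`. The angle `θ = π/2 - arctan μ` (the arccotangent
of `μ`) then has `θ' ≥ a` and stays in `(0, π)`, so letting the initial time tend to `0`
gives `θ t ≥ a t`. As `cot` decreases on `(0, π)`, this is `μ t ≤ cot (a t)`.
-/

open Real Set Filter Topology

theorem mul_le_of_le_deriv_of_nonneg {g g' : ℝ → ℝ} {a T t : ℝ}
    (hg : ∀ s ∈ Ioo 0 T, HasDerivAt g (g' s) s) (hg' : ∀ s ∈ Ioo 0 T, a ≤ g' s)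
    (hg0 : ∀ s ∈ Ioo 0 T, 0 ≤ g s) (ht : t ∈ Ioo 0 T) : a * t ≤ g t := by
  have hgrowth : ∀ s ∈ Ioo 0 t, a * (t - s) ≤ g t := by
    intro s hs
    have hsT : s ∈ Ioo 0 T := ⟨hs.1, hs.2.trans ht.2⟩
    have hmvt := (convex_Ioo 0 T).mul_sub_le_image_sub_of_le_deriv
      (fun s hs => (hg s hs).continuousAt.continuousWithinAt)
      (fun s hs => (hg s (interior_subset hs)).differentiableAt.differentiableWithinAt)
      (fun s hs => (hg s (interior_subset hs)).deriv ▸ hg' s (interior_subset hs))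
      s hsT t ht hs.2.le
    linarith [hg0 s hsT]
  have hlim : Tendsto (fun s => a * (t - s)) (𝓝[>] 0) (𝓝 (a * t)) := by
    have hcont : Continuous fun s : ℝ => a * (t - s) := by fun_prop
    simpa using hcont.continuousWithinAt.tendsto (x := 0) (s := Ioi 0)
  exact le_of_tendsto hlim (eventually_of_mem (Ioo_mem_nhdsGT ht.1) hgrowth)

theorem Real.le_cot_of_arctan_le_pi_div_two_sub {x y : ℝ} (hx₀ : 0 < x) (hxπ : x < π)
    (h : arctan y ≤ π / 2 - x) : y ≤ cot x := by
  have hcot : cot x = tan (π / 2 - x) := by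
    rw [tan_pi_div_two_sub, cot_eq_cos_div_sin, tan_eq_sin_div_cos, inv_div]
  rw [hcot, ← tan_arctan y]
  exact strictMonoOn_tan.monotoneOn ⟨neg_pi_div_two_lt_arctan y, arctan_lt_pi_div_two y⟩
    ⟨by linarith, by linarith⟩ h

theorem le_cot_of_deriv_le_neg_mul_one_add_sq {μ μ' : ℝ → ℝ} {a T t : ℝ} (ha : 0 < a)
    (hμ : ∀ s ∈ Ioo 0 T, HasDerivAt μ (μ' s) s)
    (hμ' : ∀ s ∈ Ioo 0 T, μ' s ≤ -a * (1 + μ s ^ 2))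
    (ht : t ∈ Ioo 0 T) (hat : a * t < π) : μ t ≤ cot (a * t) := by
  have hangle : ∀ s ∈ Ioo 0 T,
      HasDerivAt (fun s => π / 2 - arctan (μ s)) (-(1 / (1 + μ s ^ 2) * μ' s)) s :=
    fun s hs => ((hμ s hs).arctan).const_sub _
  have hangle' : ∀ s ∈ Ioo 0 T, a ≤ -(1 / (1 + μ s ^ 2) * μ' s) := by
    intro s hs
    have hpos : 0 < 1 + μ s ^ 2 := by positivity
    rw [one_div_mul_eq_div, ← neg_div, le_div_iff₀ hpos]
    linarith [hμ' s hs]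
  have hbound := mul_le_of_le_deriv_of_nonneg hangle hangle'
    (fun s _ => sub_nonneg.2 (arctan_lt_pi_div_two _).le) ht
  exact le_cot_of_arctan_le_pi_div_two_sub (mul_pos ha ht.1) hat (by linarith)

theorem neg_sq_div_sq_sub_mul_sq_le {k vmin vmax w l : ℝ} (hk : 0 ≤ k) (hvmin : 0 < vmin)
    (hw : vmin ≤ w ∧ w ≤ vmax) :
    -l ^ 2 / w ^ 2 - k * w ^ 2 ≤ -l ^ 2 / vmax ^ 2 - k * vmin ^ 2 := by
  have hw₀ : 0 < w := hvmin.trans_le hw.1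
  have hsq : l ^ 2 / vmax ^ 2 ≤ l ^ 2 / w ^ 2 :=
    div_le_div_of_nonneg_left (sq_nonneg l) (by positivity) (pow_le_pow_left₀ hw₀.le hw.2 2)
  have hk_sq : k * vmin ^ 2 ≤ k * w ^ 2 :=
    mul_le_mul_of_nonneg_left (pow_le_pow_left₀ hvmin.le hw.1 2) hk
  rw [neg_div, neg_div]
  linarith

theorem upper_riccati_comparison_general
    (k T vmin vmax : ℝ) (hk : 0 < k)
    (hvmin : 0 < vmin) (hvv : vmin ≤ vmax)
    (v : ℝ → ℝ) (hv : ∀ t ∈ Set.Ioo (0 : ℝ) T, vmin ≤ v t ∧ v t ≤ vmax)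
    (lam lam' : ℝ → ℝ)
    (hlam : ∀ t ∈ Set.Ioo (0 : ℝ) T, HasDerivAt lam (lam' t) t)
    (hineq : ∀ t ∈ Set.Ioo (0 : ℝ) T,
      lam' t ≤ -(lam t) ^ 2 / (v t) ^ 2 - k * (v t) ^ 2) :
    ∀ t ∈ Set.Ioo (0 : ℝ) (min T (vmax / vmin * (Real.pi / Real.sqrt k))),
      lam t ≤ vmin * vmax * Real.sqrt k * Real.cot (vmin * Real.sqrt k / vmax * t) := by
  intro t ht
  have hvmax : 0 < vmax := hvmin.trans_le hvv
  have hsk : 0 < √k := sqrt_pos.2 hk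
  set c := vmin * vmax * √k with hc_def
  set a := vmin * √k / vmax with ha_def
  have hc : 0 < c := by positivity
  have ha : 0 < a := by positivity
  -- `λ / c` satisfies the normalized inequality because `a c = k vmin²` and `a / c = 1 / vmax²`.
  have hscaled : ∀ s ∈ Ioo 0 T, lam' s / c ≤ -a * (1 + (lam s / c) ^ 2) := by
    intro s hs
    have hle := (hineq s hs).trans (neg_sq_div_sq_sub_mul_sq_le hk.le hvmin (hv s hs))
    have hrhs : -lam s ^ 2 / vmax ^ 2 - k * vmin ^ 2 = c * (-a * (1 + (lam s / c) ^ 2)) := by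
      rw [hc_def, ha_def]
      field_simp
      rw [sq_sqrt hk.le]
      ring
    rw [div_le_iff₀' hc, ← hrhs]
    exact hle
  have hat : a * t < π := by
    have hlt : t < vmax / vmin * (π / √k) := ht.2.trans_le (min_le_right _ _)
    calc a * t < a * (vmax / vmin * (π / √k)) := mul_lt_mul_of_pos_left hlt ha
      _ = π := by rw [ha_def]; field_simp
  have hμ := le_cot_of_deriv_le_neg_mul_one_add_sq ha (fun s hs => (hlam s hs).div_const c)
    hscaled ⟨ht.1, ht.2.trans_le (min_le_left _ _)⟩ hat
  rwa [div_le_iff₀' hc] at hμ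

/-- **Upper Riccati comparison lemma with variable coefficient.** If
`λ' ≤ -λ²/v² - k v²` with `v_min ≤ v ≤ v_max` on `(0, T)`, then
`λ t ≤ v_min v_max √k · cot((v_min √k / v_max) t)` on
`(0, min T ((v_max/v_min)·π/√k))`. -/
theorem upper_riccati_comparison
    (k T vmin vmax : ℝ) (hk : 0 < k) (hT : 0 < T)
    (hvmin : 0 < vmin) (hvv : vmin ≤ vmax)
    (v : ℝ → ℝ) (hv : ∀ t ∈ Set.Ioo (0 : ℝ) T, vmin ≤ v t ∧ v t ≤ vmax)
    (lam lam' : ℝ → ℝ)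
    (hlam : ∀ t ∈ Set.Ioo (0 : ℝ) T, HasDerivAt lam (lam' t) t)
    (hineq : ∀ t ∈ Set.Ioo (0 : ℝ) T,
      lam' t ≤ -(lam t) ^ 2 / (v t) ^ 2 - k * (v t) ^ 2) :
    ∀ t ∈ Set.Ioo (0 : ℝ) (min T (vmax / vmin * (Real.pi / Real.sqrt k))),
      lam t ≤ vmin * vmax * Real.sqrt k * Real.cot (vmin * Real.sqrt k / vmax * t) :=
  upper_riccati_comparison_general k T vmin vmax hk hvmin hvv v hv lam lam' hlam hineq
end

section
/- Maximal interval of existence for a Riccati differential inequality: Let k > 0 and let α < β be real numbers. Let v : (α, β) → ℝ satisfy 0 < v_min ≤ v(t) ≤ v_max for all t ∈ (α, β). If there exists a differentiable function λ : (α, β) → ℝ with λ'(t) ≤ −λ(t)²/v(t)² − k·v(t)² for all t ∈ (α, β), then β − α ≤ (v_max/v_min)·(π/√k). -/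
/-!
Replacing `v` by its bounds turns the inequality into `λ' ≤ -(λ² + c²)/a` with
`a = v_max²` and `c = √k · v_min · v_max`. For such a `λ` the angle `arctan (λ / c)`
decreases at rate at least `c / a`, and it stays in `(-π/2, π/2)`, so the interval has
length at most `π a / c = (v_max / v_min) · π / √k`.
-/

open Set Real

lemma sub_le_of_forall_mem_Ioo {α β L : ℝ} (hαβ : α < β)
    (h : ∀ x ∈ Ioo α β, ∀ y ∈ Ioo α β, y - x ≤ L) : β - α ≤ L := by
  have hclosed := closure_minimal (s := Ioo α β ×ˢ Ioo α β) (t := {p : ℝ × ℝ | p.2 - p.1 ≤ L})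
    (fun p hp => h _ hp.1 _ hp.2) (isClosed_le (by fun_prop) continuous_const)
  rw [closure_prod_eq, closure_Ioo hαβ.ne] at hclosed
  exact hclosed (mk_mem_prod (left_mem_Icc.2 hαβ.le) (right_mem_Icc.2 hαβ.le))

section Riccati

variable {lam lam' : ℝ → ℝ} {a c : ℝ}

lemma riccati_arctan_deriv_nonpos (ha : 0 < a) (hc : 0 < c) {L L' : ℝ}
    (hL' : L' ≤ -(L ^ 2 + c ^ 2) / a) :
    1 / (1 + (L / c) ^ 2) * (L' / c) + c / a ≤ 0 := by
  have hpos : 0 < L ^ 2 + c ^ 2 := by positivity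
  have hrw : 1 / (1 + (L / c) ^ 2) * (L' / c) = c * L' / (L ^ 2 + c ^ 2) := by
    field_simp
    ring
  rw [hrw, div_add_div _ _ hpos.ne' ha.ne', div_nonpos_iff]
  right
  refine ⟨?_, by positivity⟩
  have := (le_div_iff₀ ha).mp hL'
  nlinarith

lemma antitoneOn_arctan_add_of_riccati {D : Set ℝ} (hD : Convex ℝ D) (ha : 0 < a) (hc : 0 < c)
    (hlam : ∀ t ∈ D, HasDerivAt lam (lam' t) t)
    (hineq : ∀ t ∈ D, lam' t ≤ -(lam t ^ 2 + c ^ 2) / a) :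
    AntitoneOn (fun t => arctan (lam t / c) + c / a * t) D := by
  have hderiv : ∀ t ∈ D, HasDerivAt (fun t => arctan (lam t / c) + c / a * t)
      (1 / (1 + (lam t / c) ^ 2) * (lam' t / c) + c / a) t := fun t ht =>
    ((hasDerivAt_arctan _).comp t ((hlam t ht).div_const c)).add
      ((hasDerivAt_id t).const_mul (c / a) |>.congr_deriv (mul_one _))
  refine antitoneOn_of_hasDerivWithinAt_nonpos hD
    (fun t ht => (hderiv t ht).continuousAt.continuousWithinAt)
    (fun t ht => (hderiv t (interior_subset ht)).hasDerivWithinAt)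
    (fun t ht => riccati_arctan_deriv_nonpos ha hc (hineq t (interior_subset ht)))

lemma sub_lt_of_riccati {D : Set ℝ} (hD : Convex ℝ D) (ha : 0 < a) (hc : 0 < c)
    (hlam : ∀ t ∈ D, HasDerivAt lam (lam' t) t)
    (hineq : ∀ t ∈ D, lam' t ≤ -(lam t ^ 2 + c ^ 2) / a)
    {x y : ℝ} (hx : x ∈ D) (hy : y ∈ D) : y - x < π * a / c := by
  rcases lt_or_ge y x with hyx | hxy
  · have : 0 < π * a / c := by positivity
    linarith
  have hmono := antitoneOn_arctan_add_of_riccati hD ha hc hlam hineq hx hy hxy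
  have hx' := arctan_lt_pi_div_two (lam x / c)
  have hy' := neg_pi_div_two_lt_arctan (lam y / c)
  have hangle : c / a * (y - x) < π := by simp only at hmono; linarith
  rw [div_mul_eq_mul_div, div_lt_iff₀ ha] at hangle
  rw [lt_div_iff₀ hc]
  linarith

theorem sub_le_of_riccati {α β : ℝ} (hαβ : α < β) (ha : 0 < a) (hc : 0 < c)
    (hlam : ∀ t ∈ Ioo α β, HasDerivAt lam (lam' t) t)
    (hineq : ∀ t ∈ Ioo α β, lam' t ≤ -(lam t ^ 2 + c ^ 2) / a) :
    β - α ≤ π * a / c :=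
  sub_le_of_forall_mem_Ioo hαβ fun _ hx _ hy =>
    (sub_lt_of_riccati (convex_Ioo α β) ha hc hlam hineq hx hy).le

end Riccati

lemma riccati_rhs_le {k v vmin vmax : ℝ} (hk : 0 ≤ k) (hvmin : 0 < vmin) (hv : vmin ≤ v ∧ v ≤ vmax)
    (L : ℝ) : -L ^ 2 / v ^ 2 - k * v ^ 2 ≤ -(L ^ 2 + k * vmin ^ 2 * vmax ^ 2) / vmax ^ 2 := by
  obtain ⟨hv₁, hv₂⟩ := hv
  have hvpos : 0 < v := hvmin.trans_le hv₁
  have hvmax : 0 < vmax := hvpos.trans_le hv₂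
  calc -L ^ 2 / v ^ 2 - k * v ^ 2 ≤ -L ^ 2 / vmax ^ 2 - k * vmin ^ 2 := by
        simp only [neg_div]
        gcongr
    _ = -(L ^ 2 + k * vmin ^ 2 * vmax ^ 2) / vmax ^ 2 := by field_simp; ring

/-- **Maximal interval of existence for a Riccati differential inequality.**
If a differentiable `λ` satisfies `λ' ≤ -λ²/v² - k v²` on `(α, β)` with
`0 < v_min ≤ v ≤ v_max`, then `β - α ≤ (v_max/v_min) · π/√k`. -/
theorem riccati_inequality_max_interval
    (k : ℝ) (hk : 0 < k) (α β : ℝ) (hαβ : α < β)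
    (v : ℝ → ℝ) (vmin vmax : ℝ) (hvmin : 0 < vmin)
    (hv : ∀ t ∈ Set.Ioo α β, vmin ≤ v t ∧ v t ≤ vmax)
    (lam lam' : ℝ → ℝ)
    (hlam : ∀ t ∈ Set.Ioo α β, HasDerivAt lam (lam' t) t)
    (hineq : ∀ t ∈ Set.Ioo α β,
      lam' t ≤ -(lam t) ^ 2 / (v t) ^ 2 - k * (v t) ^ 2) :
    β - α ≤ vmax / vmin * (Real.pi / Real.sqrt k) := by
  have hmid : (α + β) / 2 ∈ Ioo α β := ⟨by linarith, by linarith⟩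
  have hvmax : 0 < vmax := hvmin.trans_le ((hv _ hmid).1.trans (hv _ hmid).2)
  have hc : 0 < √k * vmin * vmax := by positivity
  have hc_sq : (√k * vmin * vmax) ^ 2 = k * vmin ^ 2 * vmax ^ 2 := by
    rw [mul_pow, mul_pow, sq_sqrt hk.le]
  have hriccati : ∀ t ∈ Ioo α β,
      lam' t ≤ -(lam t ^ 2 + (√k * vmin * vmax) ^ 2) / vmax ^ 2 := fun t ht =>
    hc_sq ▸ (hineq t ht).trans (riccati_rhs_le hk.le hvmin (hv t ht) (lam t))
  calc β - α ≤ π * vmax ^ 2 / (√k * vmin * vmax) :=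
        sub_le_of_riccati hαβ (by positivity) hc hlam hriccati
    _ = vmax / vmin * (π / √k) := by field_simp
end

section
/- Weighted Bochner inequality along a geodesic (Lemma 6.1, analytic form): Let E be a real inner product space of finite dimension n − 1, with n ≥ 2. Let T > 0, let S : (0,T) → (E →L[ℝ] E) be differentiable with each S(t) self-adjoint, and let R : (0,T) → (E →L[ℝ] E) be continuous with each R(t) self-adjoint, satisfying the Riccati equation S'(t) = −S(t)∘S(t) − R(t) for all t ∈ (0,T). Let a : (0,T) → ℝ be differentiable, let F : (0,T) → ℝ satisfy F' = a, and set v = e^{F/(n−1)}. Define m(t) = trace(S(t)) − a(t) and ρ(t) = trace(R(t)) + a'(t) + a(t)²/(n−1). Then the function v²·m is differentiable and (v²·m)'(t) ≤ −v(t)²·m(t)²/(n−1) − v(t)²·ρ(t) for all t ∈ (0,T). -/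
/-!
Taking the trace of the Riccati equation `S' = -S² - R` and using the Cauchy–Schwarz bound
`(tr S)² ≤ (n-1) tr S²` gives `(tr S)' ≤ -(tr S)²/(n-1) - tr R`. The weight `v² = e^{2F/(n-1)}`
has `(v²)' = v² · 2a/(n-1)`, and this is exactly what turns the Riccati inequality for `tr S`
into one for `m = tr S - a`: expanding `(tr S)² = (m + a)²`, the cross term `2am/(n-1)` is
cancelled by the derivative of the weight and `a²/(n-1)` is absorbed into `ρ`.
-/

open scoped RealInnerProductSpace

open Module LinearMap in
theorem LinearMap.IsSymmetric.sq_trace_le_finrank_mul_trace_comp_self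
    {E : Type*} [NormedAddCommGroup E] [InnerProductSpace ℝ E] [FiniteDimensional ℝ E]
    {T : E →ₗ[ℝ] E} (hT : T.IsSymmetric) :
    trace ℝ E T ^ 2 ≤ finrank ℝ E * trace ℝ E (T ∘ₗ T) := by
  set b := hT.eigenvectorBasis rfl
  set μ := hT.eigenvalues rfl
  have htrace_sq : trace ℝ E (T ∘ₗ T) = ∑ i, μ i ^ 2 := by
    rw [trace_eq_sum_inner _ b]
    refine Fintype.sum_congr _ _ fun i => ?_
    simp [b, μ, inner_smul_right, sq]
  simpa [hT.trace_eq_sum_eigenvalues rfl, htrace_sq] using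
    sq_sum_le_card_mul_sum_sq (s := Finset.univ) (f := μ)

theorem HasDerivAt.trace {𝕜 E : Type*} [NontriviallyNormedField 𝕜] [CompleteSpace 𝕜]
    [NormedAddCommGroup E] [NormedSpace 𝕜 E] [FiniteDimensional 𝕜 E]
    {S : 𝕜 → E →L[𝕜] E} {S' : E →L[𝕜] E} {t : 𝕜} (hS : HasDerivAt S S' t) :
    HasDerivAt (fun s => LinearMap.trace 𝕜 E (S s)) (LinearMap.trace 𝕜 E S') t :=
  (LinearMap.toContinuousLinearMap ((LinearMap.trace 𝕜 E).comp
    (ContinuousLinearMap.coeLM 𝕜))).hasFDerivAt.comp_hasDerivAt t hS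

open Real in
theorem exists_hasDerivAt_exp_sq_mul_sub_le {τ a F : ℝ → ℝ} {τ' a' r c t : ℝ}
    (hτ : HasDerivAt τ τ' t) (ha : HasDerivAt a a' t) (hF : HasDerivAt F (a t) t)
    (hτ' : τ' ≤ -τ t ^ 2 / c - r) :
    ∃ d, HasDerivAt (fun s => exp (F s / c) ^ 2 * (τ s - a s)) d t ∧
      d ≤ -exp (F t / c) ^ 2 * (τ t - a t) ^ 2 / c
        - exp (F t / c) ^ 2 * (r + a' + a t ^ 2 / c) := by
  refine ⟨_, (((hF.div_const c).exp).pow 2).mul (hτ.sub ha), ?_⟩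
  have hv : 0 ≤ exp (F t / c) ^ 2 := by positivity
  rw [← sub_nonneg]
  calc 0 ≤ exp (F t / c) ^ 2 * (-τ t ^ 2 / c - r - τ') := mul_nonneg hv (by linarith)
    _ = _ := by simp only [Pi.pow_apply]; ring

theorem weighted_bochner_inequality_general
    {E : Type*} [NormedAddCommGroup E] [InnerProductSpace ℝ E]
    [FiniteDimensional ℝ E]
    (n : ℕ) (hn : 2 ≤ n) (hdim : Module.finrank ℝ E = n - 1)
    (T : ℝ)
    (S S' : ℝ → E →L[ℝ] E)
    (hS : ∀ t ∈ Set.Ioo (0 : ℝ) T, HasDerivAt S (S' t) t)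
    (hSsa : ∀ t ∈ Set.Ioo (0 : ℝ) T, ∀ x y : E, ⟪S t x, y⟫ = ⟪x, S t y⟫)
    (R : ℝ → E →L[ℝ] E)
    (hRic : ∀ t ∈ Set.Ioo (0 : ℝ) T, S' t = -(S t ∘L S t) - R t)
    (a a' : ℝ → ℝ) (ha : ∀ t ∈ Set.Ioo (0 : ℝ) T, HasDerivAt a (a' t) t)
    (F : ℝ → ℝ) (hF : ∀ t ∈ Set.Ioo (0 : ℝ) T, HasDerivAt F (a t) t)
    (v : ℝ → ℝ) (hv : v = fun t => Real.exp (F t / ((n : ℝ) - 1)))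
    (m : ℝ → ℝ) (hm : m = fun t => LinearMap.trace ℝ E (S t).toLinearMap - a t)
    (ρ : ℝ → ℝ)
    (hρ : ρ = fun t =>
      LinearMap.trace ℝ E (R t).toLinearMap + a' t + (a t) ^ 2 / ((n : ℝ) - 1)) :
    ∀ t ∈ Set.Ioo (0 : ℝ) T, ∃ d : ℝ,
      HasDerivAt (fun s => (v s) ^ 2 * m s) d t ∧
        d ≤ -(v t) ^ 2 * (m t) ^ 2 / ((n : ℝ) - 1) - (v t) ^ 2 * ρ t := by
  intro t ht
  subst hv hm hρ
  have hdim_real : (n : ℝ) - 1 = Module.finrank ℝ E := by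
    rw [hdim, Nat.cast_sub (by omega), Nat.cast_one]
  have hpos : (0 : ℝ) < n - 1 := by
    have : (2 : ℝ) ≤ n := by exact_mod_cast hn
    linarith
  have hcauchy_schwarz : LinearMap.trace ℝ E (S t).toLinearMap ^ 2 / ((n : ℝ) - 1)
      ≤ LinearMap.trace ℝ E ((S t).toLinearMap ∘ₗ (S t).toLinearMap) := by
    rw [div_le_iff₀' hpos, hdim_real]
    exact LinearMap.IsSymmetric.sq_trace_le_finrank_mul_trace_comp_self (hSsa t ht)
  have htrace_riccati : LinearMap.trace ℝ E (S' t).toLinearMap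
      ≤ -LinearMap.trace ℝ E (S t).toLinearMap ^ 2 / ((n : ℝ) - 1)
        - LinearMap.trace ℝ E (R t).toLinearMap := by
    simp only [hRic t ht, ContinuousLinearMap.toLinearMap_sub,
      ContinuousLinearMap.toLinearMap_neg, ContinuousLinearMap.toLinearMap_comp, map_sub, map_neg,
      neg_div]
    linarith
  exact exists_hasDerivAt_exp_sq_mul_sub_le (hS t ht).trace (ha t ht) (hF t ht) htrace_riccati

/-- **Weighted Bochner inequality along a geodesic** (Lemma 6.1, analytic form).
If `S' = -S∘S - R` (radial curvature / Riccati equation) on `(0,T)` with `S`, `R`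
self-adjoint on an `(n-1)`-dimensional inner product space, `F' = a`,
`v = e^{F/(n-1)}`, `m = trace S - a`, and `ρ = trace R + a' + a²/(n-1)`, then
`v² m` is differentiable with `(v² m)' ≤ -v² m²/(n-1) - v² ρ`. -/
theorem weighted_bochner_inequality
    {E : Type*} [NormedAddCommGroup E] [InnerProductSpace ℝ E]
    [FiniteDimensional ℝ E]
    (n : ℕ) (hn : 2 ≤ n) (hdim : Module.finrank ℝ E = n - 1)
    (T : ℝ) (hT : 0 < T)
    (S S' : ℝ → E →L[ℝ] E)
    (hS : ∀ t ∈ Set.Ioo (0 : ℝ) T, HasDerivAt S (S' t) t)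
    (hSsa : ∀ t ∈ Set.Ioo (0 : ℝ) T, ∀ x y : E, ⟪S t x, y⟫ = ⟪x, S t y⟫)
    (R : ℝ → E →L[ℝ] E) (hRcont : ContinuousOn R (Set.Ioo (0 : ℝ) T))
    (hRsa : ∀ t ∈ Set.Ioo (0 : ℝ) T, ∀ x y : E, ⟪R t x, y⟫ = ⟪x, R t y⟫)
    (hRic : ∀ t ∈ Set.Ioo (0 : ℝ) T, S' t = -(S t ∘L S t) - R t)
    (a a' : ℝ → ℝ) (ha : ∀ t ∈ Set.Ioo (0 : ℝ) T, HasDerivAt a (a' t) t)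
    (F : ℝ → ℝ) (hF : ∀ t ∈ Set.Ioo (0 : ℝ) T, HasDerivAt F (a t) t)
    (v : ℝ → ℝ) (hv : v = fun t => Real.exp (F t / ((n : ℝ) - 1)))
    (m : ℝ → ℝ) (hm : m = fun t => LinearMap.trace ℝ E (S t).toLinearMap - a t)
    (ρ : ℝ → ℝ)
    (hρ : ρ = fun t =>
      LinearMap.trace ℝ E (R t).toLinearMap + a' t + (a t) ^ 2 / ((n : ℝ) - 1)) :
    ∀ t ∈ Set.Ioo (0 : ℝ) T, ∃ d : ℝ,
      HasDerivAt (fun s => (v s) ^ 2 * m s) d t ∧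
        d ≤ -(v t) ^ 2 * (m t) ^ 2 / ((n : ℝ) - 1) - (v t) ^ 2 * ρ t :=
  weighted_bochner_inequality_general n hn hdim T S S' hS hSsa R hRic a a' ha F hF v hv m hm ρ hρ
end

section
/- Sturm-type zero estimate for the weighted Jacobi ODE (core of Lemma 7.1): Let k > 0, let f : ℝ → ℝ be continuously differentiable, and suppose there are constants 0 < u_min ≤ u_max with u_min ≤ e^{f(t)} ≤ u_max for all t. Let ψ : ℝ → ℝ be twice differentiable with ψ''(t) + 2·f'(t)·ψ'(t) + k·ψ(t) = 0 for all t, ψ(0) = 0, and ψ'(0) = 1. Then there exists L with 0 < L ≤ (u_max/u_min)·(π/√k) and ψ(L) = 0. -/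
/-!
Writing `E = e^{2f}`, the equation reads `(E ψ')' = -k E ψ`, so on an interval where `ψ` has no
zero the Riccati quotient `R = E ψ' / ψ` satisfies `R' = -k E - R² / E ≤ -k u_min² - R² / u_max²`.
The angle `arctan (R / (√k u_min u_max))` then decreases at rate at least `ω = √k u_min / u_max`
while staying in `(-π/2, π/2)`, so every zero-free closed interval is shorter than `π / ω`.
A solution without zeros in `(0, π / ω]` would, by continuity, have a zero-free closed interval of
length `π / ω`.
-/

open Real Set

theorem mul_sub_lt_pi_of_riccati_le {A ω a b : ℝ} (hA : 0 < A) (hω : 0 < ω) {R R' : ℝ → ℝ}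
    (hR : ∀ t ∈ Icc a b, HasDerivAt R (R' t) t)
    (hR' : ∀ t ∈ Icc a b, R' t ≤ -(A * ω ^ 2 + R t ^ 2 / A)) :
    ω * (b - a) < π := by
  rcases lt_or_ge b a with hba | hab
  · nlinarith [pi_pos]
  set g : ℝ → ℝ := fun t => arctan (R t / (A * ω)) + ω * t
  have hg : ∀ t ∈ Icc a b,
      HasDerivAt g (1 / (1 + (R t / (A * ω)) ^ 2) * (R' t / (A * ω)) + ω) t := fun t ht =>
    ((hR t ht).div_const _).arctan.add (((hasDerivAt_id t).const_mul ω).congr_deriv (mul_one ω))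
  have hg' : ∀ t ∈ Icc a b, 1 / (1 + (R t / (A * ω)) ^ 2) * (R' t / (A * ω)) + ω ≤ 0 := by
    intro t ht
    have hAω : 0 < A * ω := mul_pos hA hω
    have hden : 0 < (A * ω) ^ 2 + R t ^ 2 := by positivity
    have hquot : 1 / (1 + (R t / (A * ω)) ^ 2) * (R' t / (A * ω)) =
        A * ω * R' t / ((A * ω) ^ 2 + R t ^ 2) := by
      field_simp
    have hnum : A * ω * -(A * ω ^ 2 + R t ^ 2 / A) = -(ω * ((A * ω) ^ 2 + R t ^ 2)) := by
      field_simp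
    rw [hquot, div_add' _ _ _ hden.ne', div_nonpos_iff]
    right
    refine ⟨?_, hden.le⟩
    linarith [mul_le_mul_of_nonneg_left (hR' t ht) hAω.le]
  have hanti : AntitoneOn g (Icc a b) :=
    antitoneOn_of_hasDerivWithinAt_nonpos (convex_Icc a b)
      (fun t ht => (hg t ht).continuousAt.continuousWithinAt)
      (fun t ht => (hg t (interior_subset ht)).hasDerivWithinAt)
      (fun t ht => hg' t (interior_subset ht))
  have hgab := hanti (left_mem_Icc.2 hab) (right_mem_Icc.2 hab) hab
  simp only [g] at hgab
  linarith [arctan_lt_pi_div_two (R a / (A * ω)), neg_pi_div_two_lt_arctan (R b / (A * ω))]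

section WeightedJacobi

variable {k : ℝ} {f f' ψ ψ' : ℝ → ℝ}

theorem hasDerivAt_exp_two_mul_mul (hf : ∀ t, HasDerivAt f (f' t) t)
    (hψ'' : ∀ t, HasDerivAt ψ' (-(2 * f' t * ψ' t + k * ψ t)) t) (t : ℝ) :
    HasDerivAt (fun t => exp (2 * f t) * ψ' t) (-(k * exp (2 * f t) * ψ t)) t :=
  (((hf t).const_mul 2).exp.mul (hψ'' t)).congr_deriv (by ring)

theorem hasDerivAt_riccati (hf : ∀ t, HasDerivAt f (f' t) t) (hψ : ∀ t, HasDerivAt ψ (ψ' t) t)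
    (hψ'' : ∀ t, HasDerivAt ψ' (-(2 * f' t * ψ' t + k * ψ t)) t) {t : ℝ} (ht : ψ t ≠ 0) :
    HasDerivAt (fun t => exp (2 * f t) * ψ' t / ψ t)
      (-(k * exp (2 * f t)) - (exp (2 * f t) * ψ' t / ψ t) ^ 2 / exp (2 * f t)) t :=
  ((hasDerivAt_exp_two_mul_mul hf hψ'' t).div (hψ t) ht).congr_deriv (by field_simp)

theorem sub_lt_of_forall_ne_zero (hk : 0 < k) {umin umax : ℝ} (humin : 0 < umin)
    (hu : ∀ t, umin ≤ exp (f t) ∧ exp (f t) ≤ umax)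
    (hf : ∀ t, HasDerivAt f (f' t) t) (hψ : ∀ t, HasDerivAt ψ (ψ' t) t)
    (hψ'' : ∀ t, HasDerivAt ψ' (-(2 * f' t * ψ' t + k * ψ t)) t)
    {a b : ℝ} (hne : ∀ t ∈ Icc a b, ψ t ≠ 0) :
    b - a < umax / umin * (π / √k) := by
  have humax : 0 < umax := humin.trans_le ((hu 0).1.trans (hu 0).2)
  have hω : 0 < √k * umin / umax := by positivity
  have hE : ∀ t, umin ^ 2 ≤ exp (2 * f t) ∧ exp (2 * f t) ≤ umax ^ 2 := fun t => by
    rw [two_mul, exp_add, ← sq]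
    exact ⟨pow_le_pow_left₀ humin.le (hu t).1 2, pow_le_pow_left₀ (exp_pos _).le (hu t).2 2⟩
  have hlen := mul_sub_lt_pi_of_riccati_le (pow_pos humax 2) hω
    (fun t ht => hasDerivAt_riccati hf hψ hψ'' (hne t ht)) fun t _ => by
      set R := exp (2 * f t) * ψ' t / ψ t
      have hAω : umax ^ 2 * (√k * umin / umax) ^ 2 = k * umin ^ 2 := by
        field_simp; rw [sq_sqrt hk.le]
      have : R ^ 2 / umax ^ 2 ≤ R ^ 2 / exp (2 * f t) :=
        div_le_div_of_nonneg_left (sq_nonneg R) (exp_pos _) (hE t).2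
      nlinarith [(hE t).1]
  have hT : umax / umin * (π / √k) = π / (√k * umin / umax) := by field_simp
  rwa [hT, lt_div_iff₀' hω]

end WeightedJacobi

theorem weighted_jacobi_ode_zero_general
    (k : ℝ) (hk : 0 < k)
    (f f' : ℝ → ℝ) (hf : ∀ t, HasDerivAt f (f' t) t)
    (umin umax : ℝ) (humin : 0 < umin)
    (hu : ∀ t, umin ≤ Real.exp (f t) ∧ Real.exp (f t) ≤ umax)
    (ψ ψ' : ℝ → ℝ)
    (hψ : ∀ t, HasDerivAt ψ (ψ' t) t)
    (hψ'' : ∀ t, HasDerivAt ψ' (-(2 * f' t * ψ' t + k * ψ t)) t) :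
    ∃ L : ℝ, 0 < L ∧ L ≤ umax / umin * (Real.pi / Real.sqrt k) ∧ ψ L = 0 := by
  set T := umax / umin * (π / √k)
  have hT : 0 < T := by
    have := humin.trans_le ((hu 0).1.trans (hu 0).2)
    positivity
  by_contra! hne
  obtain ⟨ε, hε, hball⟩ := Metric.eventually_nhds_iff.1
    ((hψ T).continuousAt.eventually_ne (hne T hT le_rfl))
  set δ := min (ε / 2) T
  have hδ : 0 < δ := lt_min (half_pos hε) hT
  have hlen := sub_lt_of_forall_ne_zero hk humin hu hf hψ hψ'' (a := δ) (b := T + δ)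
    fun t ht => by
      rcases le_or_gt t T with htT | hTt
      · exact hne t (hδ.trans_le ht.1) htT
      · refine hball ?_
        rw [Real.dist_eq, abs_of_pos (sub_pos.2 hTt)]
        linarith [ht.2, min_le_left (ε / 2) T]
  linarith

/-- **Sturm-type zero estimate for the weighted Jacobi ODE** (core of
Lemma 7.1). If `ψ'' + 2 f' ψ' + k ψ = 0`, `ψ 0 = 0`, `ψ' 0 = 1`, with `k > 0`
and `u_min ≤ e^f ≤ u_max`, then `ψ` has a zero `L` with
`0 < L ≤ (u_max/u_min) · π/√k`. -/
theorem weighted_jacobi_ode_zero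
    (k : ℝ) (hk : 0 < k)
    (f f' : ℝ → ℝ) (hf : ∀ t, HasDerivAt f (f' t) t) (hf' : Continuous f')
    (umin umax : ℝ) (humin : 0 < umin)
    (hu : ∀ t, umin ≤ Real.exp (f t) ∧ Real.exp (f t) ≤ umax)
    (ψ ψ' : ℝ → ℝ)
    (hψ : ∀ t, HasDerivAt ψ (ψ' t) t)
    (hψ'' : ∀ t, HasDerivAt ψ' (-(2 * f' t * ψ' t + k * ψ t)) t)
    (h0 : ψ 0 = 0) (h1 : ψ' 0 = 1) :
    ∃ L : ℝ, 0 < L ∧ L ≤ umax / umin * (Real.pi / Real.sqrt k) ∧ ψ L = 0 :=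
  weighted_jacobi_ode_zero_general k hk f f' hf umin umax humin hu ψ ψ' hψ hψ''
end

section
/- Weighted second variation identity along a geodesic (Proposition 5.1, formula (5.2), analytic form): Let E be a real inner product space, let α < β be real numbers, let R : [α,β] → (E →L[ℝ] E) be continuous with each R(t) self-adjoint, let a : [α,β] → ℝ be continuously differentiable, and let V : [α,β] → E be continuously differentiable. Then ∫_α^β (‖V'(t)‖² − ⟨R(t)(V(t)), V(t)⟩) dt = ∫_α^β (‖V'(t) − a(t)·V(t)‖² − ⟨R(t)(V(t)), V(t)⟩ − (a'(t) + a(t)²)·‖V(t)‖²) dt + a(β)·‖V(β)‖² − a(α)·‖V(α)‖². -/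
/-!
Completing the square gives, pointwise,
`‖V' - a V‖² - (a' + a²)‖V‖² = ‖V'‖² - (a'‖V‖² + 2a⟪V', V⟫)`,
and the subtracted term is the derivative of `a‖V‖²`; integrating it over `[α, β]`
produces the boundary terms.
-/

open scoped RealInnerProductSpace
open Set intervalIntegral

theorem norm_sub_smul_sq_sub {E : Type*} [NormedAddCommGroup E] [InnerProductSpace ℝ E]
    (v w : E) (c c' : ℝ) :
    ‖w - c • v‖ ^ 2 - (c' + c ^ 2) * ‖v‖ ^ 2 = ‖w‖ ^ 2 - (c' * ‖v‖ ^ 2 + 2 * c * ⟪w, v⟫) := by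
  rw [norm_sub_sq_real, real_inner_smul_right, norm_smul, mul_pow, Real.norm_eq_abs, sq_abs]
  ring

theorem integral_eq_sub_of_hasDerivWithinAt_Icc {E : Type*} [NormedAddCommGroup E]
    [NormedSpace ℝ E] [CompleteSpace E] {f f' : ℝ → E} {a b : ℝ} (hab : a ≤ b)
    (hf : ∀ x ∈ Icc a b, HasDerivWithinAt f (f' x) (Icc a b) x)
    (hint : IntervalIntegrable f' MeasureTheory.volume a b) :
    ∫ x in a..b, f' x = f b - f a :=
  integral_eq_sub_of_hasDerivAt_of_le hab (fun x hx => (hf x hx).continuousWithinAt)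
    (fun x hx => (hf x (Ioo_subset_Icc_self hx)).hasDerivAt (Icc_mem_nhds hx.1 hx.2)) hint

theorem weighted_second_variation_identity_general
    {E : Type*} [NormedAddCommGroup E] [InnerProductSpace ℝ E]
    (α β : ℝ) (hαβ : α < β)
    (R : ℝ → E →L[ℝ] E) (hRcont : ContinuousOn R (Set.Icc α β))
    (a a' : ℝ → ℝ)
    (ha : ∀ t ∈ Set.Icc α β, HasDerivWithinAt a (a' t) (Set.Icc α β) t)
    (ha' : ContinuousOn a' (Set.Icc α β))
    (V V' : ℝ → E)
    (hV : ∀ t ∈ Set.Icc α β, HasDerivWithinAt V (V' t) (Set.Icc α β) t)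
    (hV' : ContinuousOn V' (Set.Icc α β)) :
    ∫ t in α..β, (‖V' t‖ ^ 2 - ⟪R t (V t), V t⟫) =
      (∫ t in α..β, (‖V' t - a t • V t‖ ^ 2 - ⟪R t (V t), V t⟫
          - (a' t + (a t) ^ 2) * ‖V t‖ ^ 2))
        + a β * ‖V β‖ ^ 2 - a α * ‖V α‖ ^ 2 := by
  set g : ℝ → ℝ := fun t => a' t * ‖V t‖ ^ 2 + 2 * a t * ⟪V' t, V t⟫
  have hVc : ContinuousOn V (Icc α β) := fun t ht => (hV t ht).continuousWithinAt
  have hac : ContinuousOn a (Icc α β) := fun t ht => (ha t ht).continuousWithinAt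
  have hL_int : IntervalIntegrable (fun t => ‖V' t‖ ^ 2 - ⟪R t (V t), V t⟫)
      MeasureTheory.volume α β :=
    (hV'.norm.pow 2 |>.sub <| (hRcont.clm_apply hVc).inner hVc).intervalIntegrable_of_Icc hαβ.le
  have hg_int : IntervalIntegrable g MeasureTheory.volume α β :=
    (ha'.mul (hVc.norm.pow 2) |>.add <|
      (continuousOn_const.mul hac).mul (hV'.inner hVc)).intervalIntegrable_of_Icc hαβ.le
  have hg_deriv : ∀ t ∈ Icc α β,
      HasDerivWithinAt (fun t => a t * ‖V t‖ ^ 2) (g t) (Icc α β) t := fun t ht =>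
    ((ha t ht).mul (hV t ht).norm_sq).congr_deriv <| by
      rw [real_inner_comm]; ring
  calc ∫ t in α..β, (‖V' t‖ ^ 2 - ⟪R t (V t), V t⟫)
      = (∫ t in α..β, ((‖V' t‖ ^ 2 - ⟪R t (V t), V t⟫) - g t)) + ∫ t in α..β, g t := by
        rw [integral_sub hL_int hg_int]; ring
    _ = _ := by
        rw [integral_eq_sub_of_hasDerivWithinAt_Icc hαβ.le hg_deriv hg_int]
        simp only [sub_right_comm _ ⟪_, _⟫, norm_sub_smul_sq_sub, g]
        ring

/-- **Weighted second variation identity along a geodesic** (Proposition 5.1,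
formula (5.2), analytic form). For a `C¹` variation field `V` along `[α, β]`,
the index form `∫ (‖V'‖² - ⟪R V, V⟫)` equals
`∫ (‖V' - a V‖² - ⟪R V, V⟫ - (a' + a²)‖V‖²) + a(β)‖V(β)‖² - a(α)‖V(α)‖²`. -/
theorem weighted_second_variation_identity
    {E : Type*} [NormedAddCommGroup E] [InnerProductSpace ℝ E]
    (α β : ℝ) (hαβ : α < β)
    (R : ℝ → E →L[ℝ] E) (hRcont : ContinuousOn R (Set.Icc α β))
    (hRsa : ∀ t ∈ Set.Icc α β, ∀ x y : E, ⟪R t x, y⟫ = ⟪x, R t y⟫)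
    (a a' : ℝ → ℝ)
    (ha : ∀ t ∈ Set.Icc α β, HasDerivWithinAt a (a' t) (Set.Icc α β) t)
    (ha' : ContinuousOn a' (Set.Icc α β))
    (V V' : ℝ → E)
    (hV : ∀ t ∈ Set.Icc α β, HasDerivWithinAt V (V' t) (Set.Icc α β) t)
    (hV' : ContinuousOn V' (Set.Icc α β)) :
    ∫ t in α..β, (‖V' t‖ ^ 2 - ⟪R t (V t), V t⟫) =
      (∫ t in α..β, (‖V' t - a t • V t‖ ^ 2 - ⟪R t (V t), V t⟫
          - (a' t + (a t) ^ 2) * ‖V t‖ ^ 2))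
        + a β * ‖V β‖ ^ 2 - a α * ‖V α‖ ^ 2 :=
  weighted_second_variation_identity_general α β hαβ R hRcont a a' ha ha' V V' hV hV'
end
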